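/- arXiv:2510.09828 — 5 statements merged into one kernel-verified Lean document; each statement's English description precedes it below -/
import Mathlib

section
/- Let T = (V, E) be a finite tree on which an infection starts at source s ∈ V at time 0, with independent strictly positive edge delays τ_e for e ∈ E, and infection time τ_v = Σ_{e ∈ [s,v]} τ_e for each node v, where [s,v] is the unique path from s to v. Then the observer o* ∈ O achieving the minimum infection time among a set of observers O lies on the boundary ∂r of every feasible equivalence class r, where the equivalence classes partition V∖O by the relation u ≡ v iff the path [u,v] contains no observer. In particular, at least one feasible equivalence class exists almost surely, and the set of feasible classes forms a star arrangement (their boundaries have a common observer). -/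
open MeasureTheory ProbabilityTheory SimpleGraph

variable {V : Type*}

/-- The unique path between two vertices of a tree, as a walk. -/
noncomputable def treePath (G : SimpleGraph V) (hG : G.IsTree) (u v : V) : G.Walk u v :=
  (hG.existsUnique_path u v).choose

/-- The equivalence class (for the relation "the connecting path avoids the observer
set `O`") of a non-observer vertex `u`. -/
def classOf (G : SimpleGraph V) (hG : G.IsTree) (O : Set V) (u : V) : Set V :=
  {w | w ∉ O ∧ ∀ x ∈ (treePath G hG u w).support, x ∉ O}

/-- The boundary `∂r` of a set `r`: the observers adjacent to some vertex of `r`. -/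
def boundary (G : SimpleGraph V) (O : Set V) (r : Set V) : Set V :=
  {o | o ∈ O ∧ ∃ u ∈ r, G.Adj o u}

/-- `V_{o;R}`: vertices whose path from `o` meets no class of `R`. -/
def subtreeVerts (G : SimpleGraph V) (hG : G.IsTree) (R : Set (Set V)) (o : V) : Set V :=
  {w | ∀ r ∈ R, ∀ x ∈ (treePath G hG o w).support, x ∉ r}

/-- Infection time of `v` for source `s` and edge delays `d`: the sum of the delays
along the unique path from `s` to `v`. -/
noncomputable def infectionTime (G : SimpleGraph V) (hG : G.IsTree) (d : Sym2 V → ℝ)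
    (s v : V) : ℝ :=
  (((treePath G hG s v).edges).map d).sum

/-- A class `r` is feasible for observer infection times `τ` if, for every `o ∈ ∂r` and
observers `o₁, o₂` in the subtree `T_{o;r}` with `o₁` an ancestor of `o₂` (i.e. `o₁` on
the path from `o` to `o₂`), `τ o₁ ≤ τ o₂`. -/
def feasible (G : SimpleGraph V) (hG : G.IsTree) (O : Set V) (τ : V → ℝ) (r : Set V) :
    Prop :=
  ∀ o ∈ boundary G O r, ∀ o₁ ∈ subtreeVerts G hG {r} o ∩ O,
    ∀ o₂ ∈ subtreeVerts G hG {r} o ∩ O,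
      o₁ ∈ (treePath G hG o o₂).support → τ o₁ ≤ τ o₂

/-!
Infection times can only grow along a path leaving the source. If `r` is the class of `u`
and `o` is the first observer on the path from `u` to `o⋆`, then `o ∈ ∂r` and `o⋆` lies in
`T_{o;r}` below `o`, so feasibility of `r` gives `τ o ≤ τ o⋆`; minimality of `o⋆` forces
`o = o⋆`. Conversely, the class of the source `s` is feasible: for `o ∈ ∂r`, the subtree
`T_{o;r}` hangs off `r` at `o`, so the path from `s` to any of its vertices runs through
the path from `o`, along which times increase.
-/

namespace SimpleGraph.Walk

theorem exists_eq_append_cons_of_not_mem_of_mem {G : SimpleGraph V} (O : Set V) {u v : V}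
    (p : G.Walk u v) (hu : u ∉ O) (hv : v ∈ O) :
    ∃ (a o : V) (h : G.Adj a o) (q₁ : G.Walk u a) (q₂ : G.Walk o v),
      o ∈ O ∧ (∀ x ∈ q₁.support, x ∉ O) ∧ p = q₁.append (cons h q₂) := by
  induction p with
  | nil => exact absurd hv hu
  | @cons u w v h p ih =>
    by_cases hw : w ∈ O
    · exact ⟨u, w, h, nil, p, hw, by simpa using hu, rfl⟩
    · obtain ⟨a, o, h', q₁, q₂, ho, hq₁, rfl⟩ := ih hw hv
      refine ⟨a, o, h', cons h q₁, q₂, ho, ?_, rfl⟩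
      simpa [hu] using hq₁

end SimpleGraph.Walk

section TreePath

variable {G : SimpleGraph V} (hG : G.IsTree)

theorem treePath_isPath (a b : V) : (treePath G hG a b).IsPath :=
  (hG.existsUnique_path a b).choose_spec.1

theorem treePath_eq_of_isPath {a b : V} {p : G.Walk a b} (hp : p.IsPath) :
    treePath G hG a b = p :=
  ((hG.existsUnique_path a b).choose_spec.2 p hp).symm

theorem treePath_self (a : V) : treePath G hG a a = Walk.nil :=
  treePath_eq_of_isPath hG Walk.IsPath.nil

theorem treePath_eq_append {a b x : V} (hx : x ∈ (treePath G hG a b).support) :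
    treePath G hG a b = (treePath G hG a x).append (treePath G hG x b) := by
  classical
  have hp := treePath_isPath hG a b
  rw [treePath_eq_of_isPath hG (hp.takeUntil hx), treePath_eq_of_isPath hG (hp.dropUntil hx),
    Walk.take_spec]

theorem treePath_eq_append_cons {s a o w : V} (h : G.Adj a o)
    (hdisj : ∀ x ∈ (treePath G hG s a).support, x ∉ (treePath G hG o w).support) :
    treePath G hG s w = (treePath G hG s a).append (.cons h (treePath G hG o w)) := by
  refine treePath_eq_of_isPath hG ?_
  rw [Walk.isPath_def, Walk.support_append, Walk.support_cons, List.tail_cons]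
  exact (treePath_isPath hG s a).support_nodup.append (treePath_isPath hG o w).support_nodup
    (List.disjoint_left.2 hdisj)

theorem infectionTime_le_of_mem_support {d : Sym2 V → ℝ} (hd : ∀ e ∈ G.edgeSet, 0 ≤ d e)
    {s a b : V} (hab : a ∈ (treePath G hG s b).support) :
    infectionTime G hG d s a ≤ infectionTime G hG d s b := by
  have hrest : 0 ≤ ((treePath G hG a b).edges.map d).sum :=
    List.sum_nonneg fun _ hy ↦ by
      obtain ⟨e, he, rfl⟩ := List.mem_map.1 hy
      exact hd e ((treePath G hG a b).edges_subset_edgeSet he)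
  unfold infectionTime
  rw [treePath_eq_append hG hab, Walk.edges_append, List.map_append, List.sum_append]
  linarith

end TreePath

section Classes

variable {G : SimpleGraph V} (hG : G.IsTree) {O : Set V}

theorem mem_subtreeVerts_singleton_iff {r : Set V} {o w : V} :
    w ∈ subtreeVerts G hG {r} o ↔ ∀ x ∈ (treePath G hG o w).support, x ∉ r := by
  simp [subtreeVerts]

theorem mem_classOf_of_mem_support {u w x : V} (hw : w ∈ classOf G hG O u)
    (hx : x ∈ (treePath G hG u w).support) : x ∈ classOf G hG O u := by
  refine ⟨hw.2 x hx, fun y hy ↦ hw.2 y ?_⟩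
  rw [treePath_eq_append hG hx]
  exact Walk.mem_support_append_iff _ _ |>.2 (.inl hy)

-- The witness is the first observer on the path from `u` to `v`.
theorem exists_mem_boundary_mem_subtreeVerts {u v : V} (hu : u ∉ O) (hv : v ∈ O) :
    ∃ o ∈ boundary G O (classOf G hG O u), v ∈ subtreeVerts G hG {classOf G hG O u} o := by
  obtain ⟨a, o, h, q₁, q₂, hoO, hq₁, hsplit⟩ :=
    (treePath G hG u v).exists_eq_append_cons_of_not_mem_of_mem O hu hv
  have hp := treePath_isPath hG u v
  rw [hsplit] at hp
  have ha : a ∈ classOf G hG O u := by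
    refine ⟨hq₁ a q₁.end_mem_support, ?_⟩
    rwa [treePath_eq_of_isPath hG hp.of_append_left]
  have hq₂ : q₂.IsPath := hp.of_append_right.of_cons
  refine ⟨o, ⟨hoO, a, ha, h.symm⟩,
    (mem_subtreeVerts_singleton_iff hG).2 fun x hx hxr ↦ ?_⟩
  rw [treePath_eq_of_isPath hG hq₂] at hx
  obtain ⟨q₂₁, q₂₂, -, -, rfl⟩ := hq₂.mem_support_iff_exists_append.1 hx
  rw [← Walk.cons_append, Walk.append_assoc] at hp
  have ho : o ∈ (treePath G hG u x).support := by
    rw [treePath_eq_of_isPath hG hp.of_append_left]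
    simp
  exact hxr.2 o ho hoO

theorem feasible_classOf_infectionTime_self {d : Sym2 V → ℝ}
    (hd : ∀ e ∈ G.edgeSet, 0 ≤ d e) (s : V) :
    feasible G hG O (infectionTime G hG d s) (classOf G hG O s) := by
  rintro o ⟨-, a, ha, hoa⟩ o₁ - o₂ ⟨ho₂, -⟩ h12
  rw [mem_subtreeVerts_singleton_iff] at ho₂
  apply infectionTime_le_of_mem_support hG hd
  rw [treePath_eq_append_cons hG hoa.symm
    fun x hx hx' ↦ ho₂ x hx' (mem_classOf_of_mem_support hG ha hx)]
  simp [h12]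

theorem mem_boundary_of_feasible {τ : V → ℝ} {u ostar : V} (hu : u ∉ O)
    (hfeas : feasible G hG O τ (classOf G hG O u)) (hostar : ostar ∈ O)
    (hmin : ∀ w ∈ O, w ≠ ostar → τ ostar < τ w) :
    ostar ∈ boundary G O (classOf G hG O u) := by
  obtain ⟨o, ho, hostar_sub⟩ := exists_mem_boundary_mem_subtreeVerts hG hu hostar
  have ho_sub : o ∈ subtreeVerts G hG {classOf G hG O u} o := by
    rw [mem_subtreeVerts_singleton_iff, treePath_self]
    simpa using fun hor ↦ hor.1 ho.1
  have hle : τ o ≤ τ ostar :=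
    hfeas o ho o ⟨ho_sub, ho.1⟩ ostar ⟨hostar_sub, hostar⟩ (Walk.start_mem_support _)
  obtain rfl : o = ostar := by_contra fun hne ↦ (hmin o ho.1 hne).not_ge hle
  exact ho

end Classes

theorem feasible_classes_star_general
    (G : SimpleGraph V) (hG : G.IsTree) (O : Set V)
    (d : Sym2 V → ℝ) (hd : ∀ e ∈ G.edgeSet, 0 < d e)
    (s : V) (hs : s ∉ O)
    (τ : V → ℝ) (hτ : τ = infectionTime G hG d s)
    (ostar : V) (hostar : ostar ∈ O)
    (hmin : ∀ w ∈ O, w ≠ ostar → τ ostar < τ w) :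
    (∀ u : V, u ∉ O → feasible G hG O τ (classOf G hG O u) →
        ostar ∈ boundary G O (classOf G hG O u)) ∧
      (∃ u : V, u ∉ O ∧ feasible G hG O τ (classOf G hG O u)) ∧
      (∃ o ∈ O, ∀ u : V, u ∉ O → feasible G hG O τ (classOf G hG O u) →
        o ∈ boundary G O (classOf G hG O u)) := by
  have hstar : ∀ u, u ∉ O → feasible G hG O τ (classOf G hG O u) →
      ostar ∈ boundary G O (classOf G hG O u) :=
    fun _ hu hfeas ↦ mem_boundary_of_feasible hG hu hfeas hostar hmin
  have hsource : feasible G hG O τ (classOf G hG O s) :=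
    hτ ▸ feasible_classOf_infectionTime_self hG (fun e he ↦ (hd e he).le) s
  exact ⟨hstar, ⟨s, hs, hsource⟩, ostar, hostar, hstar⟩

/-- Theorem (feasibility characterization): in the tree infection model with strictly
positive edge delays and infection times `τ v = Σ_{e ∈ [s,v]} τ_e`, the observer `o⋆`
achieving the (a.s. unique) minimum infection time among the observers lies in the
boundary of every feasible equivalence class; at least one feasible class exists; and the
feasible classes form a star arrangement (their boundaries share a common observer). -/
theorem feasible_classes_star
    [Fintype V] (G : SimpleGraph V) (hG : G.IsTree) (O : Set V)
    (hO : O.Nonempty) (hOproper : O ≠ Set.univ)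
    (d : Sym2 V → ℝ) (hd : ∀ e ∈ G.edgeSet, 0 < d e)
    (s : V) (hs : s ∉ O)
    (τ : V → ℝ) (hτ : τ = infectionTime G hG d s)
    (ostar : V) (hostar : ostar ∈ O)
    (hmin : ∀ w ∈ O, w ≠ ostar → τ ostar < τ w) :
    (∀ u : V, u ∉ O → feasible G hG O τ (classOf G hG O u) →
        ostar ∈ boundary G O (classOf G hG O u)) ∧
      (∃ u : V, u ∉ O ∧ feasible G hG O τ (classOf G hG O u)) ∧
      (∃ o ∈ O, ∀ u : V, u ∉ O → feasible G hG O τ (classOf G hG O u) →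
        o ∈ boundary G O (classOf G hG O u)) :=
  feasible_classes_star_general G hG O d hd s hs τ hτ ostar hostar hmin
end

section
/- In the tree infection model, with probability one the source s cannot belong to a non-feasible equivalence class: if r is an equivalence class of V∖O and there exist o ∈ ∂r and observers o_1, o_2 in the subtree T_{o;r} with o_2 a descendant of o_1 but τ_{o_2} < τ_{o_1}, then s ∉ r. -/
open MeasureTheory ProbabilityTheory SimpleGraph

variable {V : Type*}

lemma treePath_isPath_s4 (G : SimpleGraph V) (hG : G.IsTree) (u v : V) :
    (treePath G hG u v).IsPath :=
  (hG.existsUnique_path u v).choose_spec.1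

lemma treePath_eq (G : SimpleGraph V) (hG : G.IsTree) {u v : V} (p : G.Walk u v)
    (hp : p.IsPath) : treePath G hG u v = p :=
  ((hG.existsUnique_path u v).choose_spec.2 p hp).symm

lemma isPath_append {G : SimpleGraph V} {a b c : V} {p : G.Walk a b} {q : G.Walk b c}
    (hp : p.IsPath) (hq : q.IsPath)
    (h : ∀ x ∈ p.support, x ∈ q.support → x = b) : (p.append q).IsPath := by
  rw [SimpleGraph.Walk.isPath_def, SimpleGraph.Walk.support_append, List.nodup_append]
  refine ⟨hp.support_nodup, ?_, ?_⟩
  · have := hq.support_nodup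
    rw [q.support_eq_cons] at this
    exact this.of_cons
  · intro x hx y hx' hxy
    subst hxy
    have hxq : x ∈ q.support := List.mem_of_mem_tail hx'
    have hxb : x = b := h x hx hxq
    have := hq.support_nodup
    rw [q.support_eq_cons, List.nodup_cons] at this
    exact this.1 (hxb ▸ hx')

lemma mem_class_of_mem_support (G : SimpleGraph V) (hG : G.IsTree) (O : Set V)
    {u b w : V} (hb : b ∈ classOf G hG O u)
    (hw : w ∈ (treePath G hG u b).support) : w ∈ classOf G hG O u := by
  classical
  have hpath := (treePath_isPath_s4 G hG u b).takeUntil hw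
  have heq : treePath G hG u w = (treePath G hG u b).takeUntil w hw :=
    treePath_eq G hG _ hpath
  refine ⟨hb.2 w hw, ?_⟩
  intro x hx
  rw [heq] at hx
  exact hb.2 x ((treePath G hG u b).support_takeUntil_subset hw hx)

lemma support_subset_class (G : SimpleGraph V) (hG : G.IsTree) (O : Set V)
    {u a b w : V} (ha : a ∈ classOf G hG O u) (hb : b ∈ classOf G hG O u)
    (hw : w ∈ (treePath G hG a b).support) : w ∈ classOf G hG O u := by
  classical
  set q := ((treePath G hG u a).reverse.append (treePath G hG u b)).bypass with hq
  have hqpath : q.IsPath := SimpleGraph.Walk.bypass_isPath _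
  have heq : treePath G hG a b = q := treePath_eq G hG _ hqpath
  rw [heq] at hw
  have hw' := SimpleGraph.Walk.support_bypass_subset _ hw
  rw [SimpleGraph.Walk.mem_support_append_iff] at hw'
  rcases hw' with hw' | hw'
  · rw [SimpleGraph.Walk.support_reverse, List.mem_reverse] at hw'
    exact mem_class_of_mem_support G hG O ha hw'
  · exact mem_class_of_mem_support G hG O hb hw'

/-- Lemma: the source cannot belong to a non-feasible equivalence class.  If `r` is an
equivalence class of `V ∖ O` and there are `o ∈ ∂r` and observers `o₁, o₂` in the subtree
`T_{o;r}` with `o₂` a (strict) descendant of `o₁` but `τ_{o₂} < τ_{o₁}`, then `s ∉ r`. -/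
theorem source_not_in_nonfeasible_class
    [Fintype V] (G : SimpleGraph V) (hG : G.IsTree) (O : Set V)
    (d : Sym2 V → ℝ) (hd : ∀ e ∈ G.edgeSet, 0 < d e)
    (s : V) (hs : s ∉ O)
    (τ : V → ℝ) (hτ : τ = infectionTime G hG d s)
    (u : V) (hu : u ∉ O)
    (o : V) (ho : o ∈ boundary G O (classOf G hG O u))
    (o₁ o₂ : V)
    (ho₁ : o₁ ∈ subtreeVerts G hG {classOf G hG O u} o ∩ O)
    (ho₂ : o₂ ∈ subtreeVerts G hG {classOf G hG O u} o ∩ O)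
    (hne : o₁ ≠ o₂)
    (hdesc : o₁ ∈ (treePath G hG o o₂).support)
    (hlt : τ o₂ < τ o₁) :
    s ∉ classOf G hG O u := by
  classical
  intro hsr
  set r := classOf G hG O u with hr
  obtain ⟨hoO, u', hu'r, hadj⟩ := ho
  -- the path from o to o₂ avoids r
  have hq2 : ∀ x ∈ (treePath G hG o o₂).support, x ∉ r := ho₂.1 r rfl
  -- the path from s to u' stays in r
  set P0 := treePath G hG s u' with hP0
  have hP0r : ∀ x ∈ P0.support, x ∈ r := fun x hx =>
    support_subset_class G hG O hsr hu'r hx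
  -- the walk P from s to o
  set P : G.Walk s o := P0.concat hadj.symm with hP
  have hPsupp : ∀ x ∈ P.support, x ∈ r ∨ x = o := by
    intro x hx
    rw [hP, SimpleGraph.Walk.support_concat,
      List.mem_append, List.mem_singleton] at hx
    rcases hx with hx | hx
    · exact Or.inl (hP0r x hx)
    · exact Or.inr hx
  have hPpath : P.IsPath := by
    rw [hP, SimpleGraph.Walk.concat_eq_append]
    refine isPath_append (treePath_isPath_s4 G hG s u') ?_ ?_
    · rw [SimpleGraph.Walk.isPath_def]
      simp only [SimpleGraph.Walk.support_cons, SimpleGraph.Walk.support_nil]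
      refine List.nodup_cons.2 ⟨?_, List.nodup_singleton o⟩
      simp only [List.mem_singleton]
      intro h
      exact (hu'r.1) (h ▸ hoO)
    · intro x hx hx'
      simp only [SimpleGraph.Walk.support_cons, SimpleGraph.Walk.support_nil,
        List.mem_cons, List.mem_singleton, List.not_mem_nil, or_false] at hx'
      rcases hx' with hx' | hx'
      · exact hx'
      · exact ((hP0r x hx).1 (hx' ▸ hoO)).elim
  set Q := treePath G hG o o₂ with hQ
  have hQpath : Q.IsPath := treePath_isPath_s4 G hG o o₂
  have hsep : ∀ x ∈ P.support, x ∈ Q.support → x = o := by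
    intro x hx hx'
    rcases hPsupp x hx with hxr | hxo
    · exact absurd hxr (hq2 x hx')
    · exact hxo
  -- the whole path from s to o₂
  have hW : treePath G hG s o₂ = P.append Q :=
    treePath_eq G hG _ (isPath_append hPpath hQpath hsep)
  -- the path from s to o₁
  set Q1 := Q.takeUntil o₁ hdesc with hQ1
  have hQ1path : Q1.IsPath := hQpath.takeUntil hdesc
  have hW1 : treePath G hG s o₁ = P.append Q1 := by
    refine treePath_eq G hG _ (isPath_append hPpath hQ1path ?_)
    intro x hx hx'
    exact hsep x hx (Q.support_takeUntil_subset hdesc hx')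
  set Q2 := Q.dropUntil o₁ hdesc with hQ2
  have hsplit : Q1.append Q2 = Q := Q.take_spec hdesc
  have hτ2 : τ o₂ = τ o₁ + ((Q2.edges).map d).sum := by
    rw [hτ]
    simp only [infectionTime, hW, hW1, SimpleGraph.Walk.edges_append, ← hsplit,
      List.map_append, List.sum_append]
    ring
  have hnonneg : 0 ≤ ((Q2.edges).map d).sum := by
    refine List.sum_nonneg ?_
    intro x hx
    rw [List.mem_map] at hx
    obtain ⟨e, he, rfl⟩ := hx
    exact le_of_lt (hd e (Q2.edges_subset_edgeSet he))
  linarith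
end

section
/- Let X = (X_1, …, X_d) be a random vector, F = F(X) a square-integrable statistic with E[F] = θ, and define G := ((d−1)/(2d−1)) F + (1/(2d−1)) Σ_{i=1}^d E[F | X_i]. Then E[G] = θ, and if α ≥ 0 satisfies E[(1/d) Σ_{i=1}^d Var(F | X_i)] ≥ α · Var(F), then Var(G) ≤ (1 − αd/(2d−1)) Var(F). -/
open MeasureTheory ProbabilityTheory

lemma key_ineq (d c S α : ℝ) (hd : 1 ≤ d) (hc : 0 ≤ c) (hS : 0 ≤ S)
    (hα : 0 ≤ α) (h : S ^ 2 ≤ d ^ 2 * c ^ 2 * (1 - α)) :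
    ((d - 1) * c + S) ^ 2 ≤ ((2 * d - 1) ^ 2 - α * d * (2 * d - 1)) * c ^ 2 := by
  have hd0 : (0:ℝ) < d := by linarith
  rcases eq_or_lt_of_le hc with hc0 | hc0
  · subst hc0
    have hS0 : S = 0 := le_antisymm (by nlinarith [sq_nonneg S]) hS
    rw [hS0]; ring_nf; nlinarith
  have hdc : 0 < d ^ 2 * c ^ 2 := by positivity
  have hα1 : α ≤ 1 := by nlinarith [sq_nonneg S]
  have h2α : (0:ℝ) < 2 - α := by linarith
  have hy : 0 < (2 - α) * d * c ^ 2 := by positivity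
  have h2 : 2 * c * S ≤ (2 - α) * d * c ^ 2 := by
    nlinarith [mul_nonneg hc hS, sq_nonneg (α * d * c ^ 2),
      mul_le_mul_of_nonneg_left h (show (0:ℝ) ≤ 4 * c ^ 2 by positivity)]
  nlinarith [h, mul_le_mul_of_nonneg_left h2 (show (0:ℝ) ≤ d - 1 by linarith)]

lemma Lp_coeFn_sum {α E : Type*} [MeasurableSpace α] {μ : Measure α} [NormedAddCommGroup E]
    {p : ENNReal} {ι : Type*} (s : Finset ι) (f : ι → Lp E p μ) :
    (((∑ i ∈ s, f i : Lp E p μ)) : α → E) =ᵐ[μ] fun ω => ∑ i ∈ s, f i ω := by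
  classical
  induction s using Finset.induction_on with
  | empty => simp; exact Lp.coeFn_zero E p μ
  | insert _ _ hns ih =>
      rename_i j t
      rw [Finset.sum_insert hns]
      filter_upwards [Lp.coeFn_add (f j) (∑ i ∈ t, f i), ih] with ω h1 h2
      rw [h1, Pi.add_apply, h2, Finset.sum_insert hns]

set_option maxHeartbeats 1000000 in
/-- Variance reduction by averaging conditional expectations: for a square-integrable
statistic `F` of `X = (X_1, ..., X_d)` with mean `θ`, the statistic
`G = ((d-1)/(2d-1)) F + (1/(2d-1)) Σ_i E[F|X_i]` is unbiased for `θ`, and if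
`E[(1/d) Σ_i Var(F|X_i)] ≥ α Var(F)` with `α ≥ 0`, then
`Var(G) ≤ (1 - αd/(2d-1)) Var(F)`.  (Here `E[Var(F|X_i)]` is expressed as
`E[(F - E[F|X_i])²]`, by the tower property.) -/
theorem variance_reduction
    {Ω : Type*} [m0 : MeasurableSpace Ω] (P : Measure Ω) [IsProbabilityMeasure P]
    (d : ℕ) (hd : 0 < d) (X : Fin d → Ω → ℝ) (hX : ∀ i, Measurable (X i))
    (F : Ω → ℝ) (hF : MemLp F 2 P) (θ : ℝ) (hθ : ∫ ω, F ω ∂P = θ)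
    (G : Ω → ℝ)
    (hG : G = fun ω => ((d : ℝ) - 1) / (2 * d - 1) * F ω
        + 1 / (2 * d - 1) * ∑ i, (P[F | MeasurableSpace.comap (X i) inferInstance]) ω)
    (α : ℝ) (hα : 0 ≤ α)
    (hcv : α * variance F P ≤
      (1 / (d : ℝ)) * ∑ i,
        ∫ ω, (F ω - (P[F | MeasurableSpace.comap (X i) inferInstance]) ω) ^ 2 ∂P) :
    ∫ ω, G ω ∂P = θ ∧
      variance G P ≤ (1 - α * d / (2 * d - 1)) * variance F P := by
  classical
  have hd1 : (1:ℝ) ≤ d := by exact_mod_cast hd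
  have hd0 : (0:ℝ) < d := by linarith
  have hD : (0:ℝ) < 2 * d - 1 := by linarith
  have hD' : (d:ℝ) * 2 - 1 ≠ 0 := by linarith
  set m' : Fin d → MeasurableSpace Ω := fun i => MeasurableSpace.comap (X i) inferInstance with hm'def
  have hm : ∀ i, m' i ≤ m0 := fun i => (hX i).comap_le
  have hsf : ∀ i, SigmaFinite (P.trim (hm i)) := fun i => inferInstance
  have hFi : Integrable F P := hF.integrable one_le_two
  have hFθ : MemLp (fun ω => F ω - θ) 2 P := hF.sub (memLp_const θ)
  set f₀ : Lp ℝ 2 P := hFθ.toLp _ with hf₀def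
  set y : ∀ i : Fin d, Lp ℝ 2 P := fun i => ((condExpL2 ℝ ℝ (hm i) f₀ : lpMeas ℝ ℝ (m' i) 2 P) : Lp ℝ 2 P) with hydef
  -- bridge: condexp agrees a.e. with the L² orthogonal projection
  have hyae : ∀ i, (P[(fun ω => F ω - θ) | m' i]) =ᵐ[P] y i := by
    intro i
    haveI := hsf i
    refine (ae_eq_condExp_of_forall_setIntegral_eq (hm i) (hFθ.integrable one_le_two)
      (fun s _ _ => (integrable_condExpL2_of_isFiniteMeasure (hm i)).integrableOn)
      (fun s hs hμs => ?_) (aestronglyMeasurable_condExpL2 (hm i) f₀)).symm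
    rw [integral_condExpL2_eq (hm i) f₀ hs hμs.ne]
    exact setIntegral_congr_ae ((hm i) s hs) ((hFθ.coeFn_toLp).mono fun ω h _ => h)
  have hYsub : ∀ i, (fun ω => (P[F | m' i]) ω - θ) =ᵐ[P] y i := by
    intro i
    haveI := hsf i
    have h2 := condExp_sub (m := m' i) (μ := P) hFi (integrable_const θ)
    have h3 : P[(fun _ => θ : Ω → ℝ) | m' i] = fun _ => θ := condExp_const (hm i) θ
    refine Filter.EventuallyEq.trans ?_ (hyae i)
    filter_upwards [h2] with ω h2ω
    rw [show (fun ω => F ω - θ) = F - (fun _ => θ : Ω → ℝ) from rfl, h2ω, Pi.sub_apply, h3]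
  have hnormsq : ∀ g : Lp ℝ 2 P, ‖g‖ ^ 2 = ∫ ω, (g ω) ^ 2 ∂P := by
    intro g
    rw [← real_inner_self_eq_norm_sq, L2.inner_def]
    simp [RCLike.inner_apply, sq]
  have hpyth : ∀ i, ‖f₀‖ ^ 2 = ‖y i‖ ^ 2 + ‖f₀ - y i‖ ^ 2 := by
    intro i
    haveI : Fact (m' i ≤ m0) := ⟨hm i⟩
    have horth : inner (𝕜 := ℝ) (f₀ - y i) (y i) = 0 :=
      Submodule.starProjection_inner_eq_zero f₀ (y i) (SetLike.coe_mem _)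
    have hdec : f₀ = (f₀ - y i) + y i := by abel
    calc ‖f₀‖ ^ 2 = ‖(f₀ - y i) + y i‖ ^ 2 := by rw [← hdec]
      _ = ‖f₀ - y i‖ ^ 2 + 2 * inner (𝕜 := ℝ) (f₀ - y i) (y i) + ‖y i‖ ^ 2 :=
          norm_add_sq_real _ _
      _ = ‖y i‖ ^ 2 + ‖f₀ - y i‖ ^ 2 := by rw [horth]; ring
  -- variance of F
  have hVc : variance F P = ‖f₀‖ ^ 2 := by
    rw [hnormsq]
    rw [variance_eq_integral hF.aestronglyMeasurable.aemeasurable, hθ]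
    exact integral_congr_ae ((hFθ.coeFn_toLp).mono fun ω h => by
      simp only [Pi.pow_apply, Pi.sub_apply]; rw [h])
  -- conditional variances
  have hwi : ∀ i, ∫ ω, (F ω - (P[F | m' i]) ω) ^ 2 ∂P = ‖f₀ - y i‖ ^ 2 := by
    intro i
    rw [hnormsq]
    refine integral_congr_ae ?_
    filter_upwards [hFθ.coeFn_toLp, hYsub i, Lp.coeFn_sub f₀ (y i)] with ω h1 h2 h3
    rw [h3, Pi.sub_apply, h1, ← h2]
    ring
  -- unbiasedness
  have hYint : ∀ i, Integrable (P[F | m' i]) P := fun i => integrable_condExp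
  have hYieq : ∀ i, ∫ ω, (P[F | m' i]) ω ∂P = θ := by
    intro i
    haveI := hsf i
    rw [integral_condExp (hm i)]; exact hθ
  have hmean : ∫ ω, G ω ∂P = θ := by
    rw [hG]
    rw [integral_add (hFi.const_mul _) ((integrable_finset_sum _ fun i _ => hYint i).const_mul _),
      integral_const_mul, integral_const_mul, integral_finset_sum _ fun i _ => hYint i]
    simp only [hYieq, hθ, Finset.sum_const, Finset.card_univ, Fintype.card_fin, nsmul_eq_mul]
    field_simp
    ring
  refine ⟨hmean, ?_⟩
  -- Memℒp facts
  have hYmem : ∀ i, MemLp (P[F | m' i]) 2 P := by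
    intro i
    refine ((Lp.memLp (y i)).add (memLp_const θ)).ae_eq ?_
    filter_upwards [hYsub i] with ω h
    simp only [Pi.add_apply]
    linarith [h]
  have hGmem : MemLp G 2 P := by
    rw [hG]
    exact (hF.const_mul _).add ((memLp_finsetSum Finset.univ fun i _ => hYmem i).const_mul _)
  set gLp : Lp ℝ 2 P := (((d:ℝ) - 1) / (2 * d - 1)) • f₀ + ((1:ℝ) / (2 * d - 1)) • ∑ i, y i with hgdef
  have hGae : (fun ω => G ω - θ) =ᵐ[P] gLp := by
    have hall : ∀ᵐ ω ∂P, ∀ i, (P[F | m' i]) ω - θ = y i ω :=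
      (ae_all_iff).2 fun i => hYsub i
    filter_upwards [hall, hFθ.coeFn_toLp,
      Lp.coeFn_add ((((d:ℝ) - 1) / (2 * d - 1)) • f₀) (((1:ℝ) / (2 * d - 1)) • ∑ i, y i),
      Lp.coeFn_smul (((d:ℝ) - 1) / (2 * d - 1)) f₀,
      Lp.coeFn_smul ((1:ℝ) / (2 * d - 1)) (∑ i, y i),
      Lp_coeFn_sum Finset.univ y] with ω h0 h1 h2 h3 h4 h5
    rw [hG, h2, Pi.add_apply, h3, h4, Pi.smul_apply, Pi.smul_apply, h5, h1, smul_eq_mul, smul_eq_mul]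
    have hsum : ∑ i, y i ω = (∑ i, (P[F | m' i]) ω) - d * θ := by
      rw [show (∑ i, y i ω) = ∑ i, ((P[F | m' i]) ω - θ) from
        Finset.sum_congr rfl fun i _ => (h0 i).symm, Finset.sum_sub_distrib,
        Finset.sum_const, Finset.card_univ, Fintype.card_fin, nsmul_eq_mul]
    rw [hsum]
    field_simp
    ring
  -- variance of G
  have hVG : variance G P = ‖gLp‖ ^ 2 := by
    rw [hnormsq, variance_eq_integral hGmem.aestronglyMeasurable.aemeasurable, hmean]
    exact integral_congr_ae (hGae.mono fun ω h => by
      simp only [Pi.pow_apply, Pi.sub_apply]; rw [← h])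
  -- norm bound
  have hbound : ‖gLp‖ ≤ ((d:ℝ) - 1) / (2 * d - 1) * ‖f₀‖ + 1 / (2 * d - 1) * ∑ i, ‖y i‖ := by
    refine le_trans (norm_add_le _ _) ?_
    rw [norm_smul, norm_smul, Real.norm_eq_abs, Real.norm_eq_abs,
      abs_of_nonneg (show (0:ℝ) ≤ ((d:ℝ) - 1) / (2 * d - 1) from
        div_nonneg (by linarith) (by linarith)),
      abs_of_nonneg (show (0:ℝ) ≤ 1 / (2 * (d:ℝ) - 1) from
        div_nonneg zero_le_one (by linarith))]
    have := norm_sum_le (Finset.univ : Finset (Fin d)) y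
    have hb : (0:ℝ) ≤ 1 / (2 * (d:ℝ) - 1) := div_nonneg zero_le_one (by linarith)
    nlinarith [mul_le_mul_of_nonneg_left this hb]
  set c := ‖f₀‖ with hcdef
  set S := ∑ i, ‖y i‖ with hSdef
  have hc : 0 ≤ c := norm_nonneg _
  have hS : 0 ≤ S := Finset.sum_nonneg fun i _ => norm_nonneg _
  -- sum of conditional variances bound
  have hw_ge : (d:ℝ) * α * c ^ 2 ≤ ∑ i, ‖f₀ - y i‖ ^ 2 := by
    have h1 : α * c ^ 2 ≤ (1 / (d:ℝ)) * ∑ i, ‖f₀ - y i‖ ^ 2 := by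
      rw [← hVc]
      refine le_trans hcv (le_of_eq ?_)
      congr 1
      exact Finset.sum_congr rfl fun i _ => hwi i
    calc (d:ℝ) * α * c ^ 2 = (d:ℝ) * (α * c ^ 2) := by ring
      _ ≤ (d:ℝ) * ((1 / (d:ℝ)) * ∑ i, ‖f₀ - y i‖ ^ 2) := by gcongr
      _ = ∑ i, ‖f₀ - y i‖ ^ 2 := by field_simp
  have hS2 : S ^ 2 ≤ (d:ℝ) ^ 2 * c ^ 2 * (1 - α) := by
    have h1 : S ^ 2 ≤ (d:ℝ) * ∑ i, ‖y i‖ ^ 2 := by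
      have := sq_sum_le_card_mul_sum_sq (s := (Finset.univ : Finset (Fin d)))
        (f := fun i => ‖y i‖)
      simpa [Finset.card_univ, Fintype.card_fin] using this
    have h2 : ∑ i, ‖y i‖ ^ 2 = (d:ℝ) * c ^ 2 - ∑ i, ‖f₀ - y i‖ ^ 2 := by
      have : ∀ i : Fin d, ‖y i‖ ^ 2 = c ^ 2 - ‖f₀ - y i‖ ^ 2 := fun i => by
        have := hpyth i; linarith
      rw [Finset.sum_congr rfl fun i _ => this i, Finset.sum_sub_distrib,
        Finset.sum_const, Finset.card_univ, Fintype.card_fin, nsmul_eq_mul]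
    have h3 := mul_le_mul_of_nonneg_left hw_ge (le_of_lt hd0)
    nlinarith [h1, h2, h3]
  -- conclude
  have hkey := key_ineq (d:ℝ) c S α hd1 hc hS hα hS2
  have e1 : ((d:ℝ) - 1) / (2 * d - 1) * c + 1 / (2 * d - 1) * S = (((d:ℝ) - 1) * c + S) / (2 * d - 1) := by
    field_simp
  have e2 : (1 - α * d / (2 * d - 1)) * c ^ 2
      = (((2 * (d:ℝ) - 1) ^ 2 - α * d * (2 * d - 1)) * c ^ 2) / (2 * d - 1) ^ 2 := by
    field_simp
  rw [hVG, hVc]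
  calc ‖gLp‖ ^ 2 ≤ (((d:ℝ) - 1) / (2 * d - 1) * c + 1 / (2 * d - 1) * S) ^ 2 := by
        exact pow_le_pow_left₀ (norm_nonneg _) hbound 2
    _ = ((((d:ℝ) - 1) * c + S) / (2 * d - 1)) ^ 2 := by rw [e1]
    _ = (((d:ℝ) - 1) * c + S) ^ 2 / (2 * d - 1) ^ 2 := by rw [div_pow]
    _ ≤ (((2 * (d:ℝ) - 1) ^ 2 - α * d * (2 * d - 1)) * c ^ 2) / (2 * d - 1) ^ 2 := by
        gcongr
    _ = (1 - α * d / (2 * d - 1)) * c ^ 2 := e2.symm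
end

section
/- With notation as in the variance-reduction theorem: for any 0 ≤ λ ≤ 1 and G_λ := λF + ((1−λ)/d) Σ_{i=1}^d E[F|X_i], the bound Var(G_λ) ≤ (1 − α(1−λ)(1 + (2d−1)λ)/d) Var(F) holds, and the coefficient (1 − α(1−λ)(1 + (2d−1)λ)/d) is minimized over λ ∈ [0,1] at λ = (d−1)/(2d−1). -/
open MeasureTheory ProbabilityTheory

section Helpers

variable {Ω : Type*} [m0 : MeasurableSpace Ω] {P : Measure Ω}

lemma my_int_mul {f g : Ω → ℝ} (hf : MemLp f 2 P) (hg : MemLp g 2 P) :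
    Integrable (fun ω => f ω * g ω) P := by
  have h1 := (hf.add hg).integrable_sq
  have h2 := hf.integrable_sq
  have h3 := hg.integrable_sq
  have h : (fun ω => f ω * g ω)
      = fun ω => (((f ω + g ω) ^ 2 - f ω ^ 2) - g ω ^ 2) / 2 := by
    funext ω; ring
  rw [h]
  exact ((h1.sub h2).sub h3).div_const 2

lemma my_memℒp_two_condexp {m : MeasurableSpace Ω} [IsFiniteMeasure P]
    (hm : m ≤ m0) {F : Ω → ℝ} (hF : MemLp F 2 P) :
    MemLp (P[F|m]) 2 P := by
  letI := m0
  have hae : ((condExpL2 ℝ ℝ hm (hF.toLp F) : Lp ℝ 2 P) : Ω → ℝ) =ᵐ[P] P[F|m] := by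
    refine ae_eq_condExp_of_forall_setIntegral_eq hm (hF.integrable one_le_two)
      (fun s _ _ => (integrable_condExpL2_of_isFiniteMeasure hm).integrableOn)
      (fun s hs hμs => ?_)
      (aestronglyMeasurable_condExpL2 hm _)
    rw [integral_condExpL2_eq hm (hF.toLp F) hs hμs.ne]
    exact setIntegral_congr_ae (hm s hs) ((hF.coeFn_toLp).mono fun x hx _ => hx)
  exact (Lp.memLp _).ae_eq hae

lemma my_condexp_orth {m : MeasurableSpace Ω} [IsFiniteMeasure P]
    (hm : m ≤ m0) {F : Ω → ℝ} (hF : MemLp F 2 P) :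
    ∫ ω, F ω * (P[F|m]) ω ∂P = ∫ ω, (P[F|m]) ω * (P[F|m]) ω ∂P := by
  letI := m0
  have hG : MemLp (P[F|m]) 2 P := my_memℒp_two_condexp hm hF
  have hmul : Integrable (P[F|m] * F) P := my_int_mul hG hF
  have h2 : P[(P[F|m] * F)|m] =ᵐ[P] P[F|m] * P[F|m] :=
    condExp_mul_of_stronglyMeasurable_left stronglyMeasurable_condExp hmul
      (hF.integrable one_le_two)
  have h1 : ∫ ω, (P[F|m] * F) ω ∂P = ∫ ω, (P[(P[F|m] * F)|m]) ω ∂P :=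
    (integral_condExp hm).symm
  have h3 : ∫ ω, F ω * (P[F|m]) ω ∂P = ∫ ω, (P[F|m] * F) ω ∂P := by
    apply integral_congr_ae; filter_upwards with ω; simp [mul_comm]
  rw [h3, h1, integral_congr_ae h2]
  rfl

lemma my_center_mul [IsProbabilityMeasure P] {f g : Ω → ℝ}
    (hf : MemLp f 2 P) (hg : MemLp g 2 P) (a b : ℝ) :
    ∫ ω, (f ω - a) * (g ω - b) ∂P
      = ∫ ω, f ω * g ω ∂P - a * ∫ ω, g ω ∂P - b * ∫ ω, f ω ∂P + a * b := by
  have h : (fun ω => (f ω - a) * (g ω - b))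
      = fun ω => (f ω * g ω - a * g ω - b * f ω) + a * b := by
    funext ω; ring
  have i1 : Integrable (fun ω => f ω * g ω) P := my_int_mul hf hg
  have i2 : Integrable (fun ω => a * g ω) P :=
    (hg.integrable one_le_two).const_mul a
  have i3 : Integrable (fun ω => b * f ω) P :=
    (hf.integrable one_le_two).const_mul b
  have iA : Integrable (fun ω => f ω * g ω - a * g ω) P := i1.sub i2
  have iB : Integrable (fun ω => f ω * g ω - a * g ω - b * f ω) P := iA.sub i3
  rw [h, integral_add iB (integrable_const (a * b)), integral_sub iA i3,
    integral_sub i1 i2, integral_const_mul, integral_const_mul, integral_const]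
  simp

end Helpers

set_option maxHeartbeats 1000000 in
/-- For `G_λ = λF + ((1-λ)/d) Σ_i E[F|X_i]` with `0 ≤ λ ≤ 1`, one has
`Var(G_λ) ≤ (1 - α(1-λ)(1+(2d-1)λ)/d) Var(F)`, and the coefficient is minimized over
`λ ∈ [0,1]` at `λ = (d-1)/(2d-1)`. -/
theorem variance_reduction_lambda
    {Ω : Type*} [m0 : MeasurableSpace Ω] (P : Measure Ω) [IsProbabilityMeasure P]
    (d : ℕ) (hd : 0 < d) (X : Fin d → Ω → ℝ) (hX : ∀ i, Measurable (X i))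
    (F : Ω → ℝ) (hF : MemLp F 2 P) (θ : ℝ) (hθ : ∫ ω, F ω ∂P = θ)
    (α : ℝ) (hα : 0 ≤ α)
    (hcv : α * variance F P ≤
      (1 / (d : ℝ)) * ∑ i,
        ∫ ω, (F ω - (P[F | MeasurableSpace.comap (X i) inferInstance]) ω) ^ 2 ∂P) :
    (∀ lam : ℝ, 0 ≤ lam → lam ≤ 1 →
      variance (fun ω => lam * F ω
          + ((1 - lam) / d) * ∑ i, (P[F | MeasurableSpace.comap (X i) inferInstance]) ω) P
        ≤ (1 - α * (1 - lam) * (1 + (2 * d - 1) * lam) / d) * variance F P) ∧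
      (∀ lam : ℝ, 0 ≤ lam → lam ≤ 1 →
        1 - α * (1 - ((d : ℝ) - 1) / (2 * d - 1))
              * (1 + (2 * d - 1) * (((d : ℝ) - 1) / (2 * d - 1))) / d
          ≤ 1 - α * (1 - lam) * (1 + (2 * d - 1) * lam) / d) := by
  have hd0 : (d : ℝ) ≠ 0 := Nat.cast_ne_zero.mpr hd.ne'
  have hd1 : (1 : ℝ) ≤ (d : ℝ) := by exact_mod_cast hd
  constructor
  · -- main variance bound
    intro lam hlam0 hlam1
    set m : Fin d → MeasurableSpace Ω :=
      fun i => MeasurableSpace.comap (X i) inferInstance with hm_def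
    have hm : ∀ i, m i ≤ m0 := fun i => (hX i).comap_le
    set G : Fin d → Ω → ℝ := fun i => P[F| m i] with hG_def
    have hG2 : ∀ i, MemLp (G i) 2 P := fun i => my_memℒp_two_condexp (hm i) hF
    have hGint : ∀ i, Integrable (G i) P := fun _ => integrable_condExp
    have hFint : Integrable F P := hF.integrable one_le_two
    have hGmean : ∀ i, ∫ ω, G i ω ∂P = θ := fun i =>
      (integral_condExp (hm i)).trans hθ
    -- centered functions
    set f0 : Ω → ℝ := fun ω => F ω - θ with hf0_def
    set g0 : Fin d → Ω → ℝ := fun i ω => G i ω - θ with hg0_def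
    have hf0 : MemLp f0 2 P := hF.sub (memLp_const θ)
    have hg0 : ∀ i, MemLp (g0 i) 2 P := fun i => (hG2 i).sub (memLp_const θ)
    set V : ℝ := ∫ ω, f0 ω * f0 ω ∂P with hV_def
    set v : Fin d → ℝ := fun i => ∫ ω, g0 i ω * g0 i ω ∂P with hv_def
    -- V is the variance
    have hVvar : variance F P = V := by
      rw [variance_eq_integral hF.aemeasurable, hθ, hV_def]
      apply integral_congr_ae; filter_upwards with ω
      simp [f0, sq]
    have hV0 : 0 ≤ V := integral_nonneg fun ω => mul_self_nonneg _
    have hv0 : ∀ i, 0 ≤ v i := fun i => integral_nonneg fun ω => mul_self_nonneg _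
    -- orthogonality in centered form
    have horth : ∀ i, ∫ ω, f0 ω * g0 i ω ∂P = v i := by
      intro i
      have h1 : ∫ ω, f0 ω * g0 i ω ∂P
          = ∫ ω, F ω * G i ω ∂P - θ * θ - θ * θ + θ * θ := by
        have := my_center_mul hF (hG2 i) θ θ
        rw [hθ, hGmean i] at this
        exact this
      have h2 : v i = ∫ ω, G i ω * G i ω ∂P - θ * θ - θ * θ + θ * θ := by
        have := my_center_mul (hG2 i) (hG2 i) θ θ
        rw [hGmean i] at this
        exact this
      rw [h1, h2, my_condexp_orth (hm i) hF]
    -- the error terms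
    have he : ∀ i, ∫ ω, (F ω - G i ω) ^ 2 ∂P = V - v i := by
      intro i
      have hpt : (fun ω => (F ω - G i ω) ^ 2)
          = fun ω => (f0 ω * f0 ω - 2 * (f0 ω * g0 i ω)) + g0 i ω * g0 i ω := by
        funext ω; simp only [f0, g0]; ring
      have iA : Integrable (fun ω => 2 * (f0 ω * g0 i ω)) P :=
        (my_int_mul hf0 (hg0 i)).const_mul 2
      have iB : Integrable (fun ω => f0 ω * f0 ω - 2 * (f0 ω * g0 i ω)) P :=
        (my_int_mul hf0 hf0).sub iA
      rw [hpt, integral_add iB (my_int_mul (hg0 i) (hg0 i)),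
        integral_sub (my_int_mul hf0 hf0) iA, integral_const_mul, horth i]
      rw [← hV_def]
      have : ∫ ω, g0 i ω * g0 i ω ∂P = v i := rfl
      rw [this]
      ring
    -- the hypothesis gives a bound on ∑ v i
    set Sv : ℝ := ∑ i, v i with hSv_def
    have hSv0 : 0 ≤ Sv := Finset.sum_nonneg fun i _ => hv0 i
    have hKey : (d : ℝ) * (α * V) ≤ d * V - Sv := by
      have hsum : ∑ i,
          ∫ ω, (F ω - (P[F | MeasurableSpace.comap (X i) inferInstance]) ω) ^ 2 ∂P
          = (d : ℝ) * V - Sv := by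
        calc (∑ i, ∫ ω, (F ω - (P[F | MeasurableSpace.comap (X i) inferInstance]) ω) ^ 2 ∂P)
            = ∑ i, (V - v i) := by
              refine Finset.sum_congr rfl fun i _ => ?_
              exact he i
          _ = (d : ℝ) * V - Sv := by
              rw [Finset.sum_sub_distrib, Finset.sum_const, Finset.card_univ,
                Fintype.card_fin, nsmul_eq_mul, hSv_def]
      rw [hVvar, hsum] at hcv
      have := mul_le_mul_of_nonneg_left hcv (le_of_lt (by positivity : (0:ℝ) < (d:ℝ)))
      calc (d : ℝ) * (α * V) ≤ (d : ℝ) * ((1 / d) * (d * V - Sv)) := this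
        _ = d * V - Sv := by field_simp
    -- set up the combination
    set c : ℝ := (1 - lam) / d with hc_def
    set S0 : Ω → ℝ := fun ω => ∑ i, g0 i ω with hS0_def
    have hS0 : MemLp S0 2 P := by
      have h := memLp_finsetSum' (μ := P) (p := 2) Finset.univ (fun i _ => hg0 i)
      refine h.ae_eq (Filter.Eventually.of_forall fun ω => ?_)
      simp [S0, Finset.sum_apply]
    have hsumG : MemLp (fun ω => ∑ i, G i ω) 2 P := by
      have h := memLp_finsetSum' (μ := P) (p := 2) Finset.univ (fun i _ => hG2 i)
      refine h.ae_eq (Filter.Eventually.of_forall fun ω => ?_)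
      simp [Finset.sum_apply]
    set Gl : Ω → ℝ := fun ω => lam * F ω + c * ∑ i, G i ω with hGl_def
    have hGl2 : MemLp Gl 2 P := (hF.const_mul lam).add (hsumG.const_mul c)
    have hGlmean : ∫ ω, Gl ω ∂P = θ := by
      rw [hGl_def]
      rw [integral_add (hFint.const_mul lam)
        ((hsumG.integrable one_le_two).const_mul c)]
      rw [integral_const_mul, integral_const_mul, hθ,
        integral_finset_sum Finset.univ (fun i _ => hGint i)]
      have : ∑ i : Fin d, ∫ ω, G i ω ∂P = (d : ℝ) * θ := by
        simp [hGmean, Finset.sum_const, Finset.card_univ, nsmul_eq_mul]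
      rw [this, hc_def]
      field_simp
      ring
    -- pointwise centered identity
    have hpt : ∀ ω, Gl ω - θ = lam * f0 ω + c * S0 ω := by
      intro ω
      have hs : S0 ω = (∑ i, G i ω) - d * θ := by
        simp [S0, g0, Finset.sum_sub_distrib, Finset.sum_const, Finset.card_univ,
          nsmul_eq_mul]
      rw [hs]
      simp only [Gl, f0, c]
      field_simp
      ring
    -- variance of the combination
    have hvarGl : variance Gl P = ∫ ω, (lam * f0 ω + c * S0 ω) ^ 2 ∂P := by
      rw [variance_eq_integral hGl2.aemeasurable, hGlmean]
      apply integral_congr_ae; filter_upwards with ω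
      have := hpt ω
      rw [this]
    -- expand the square
    have hfS : ∫ ω, f0 ω * S0 ω ∂P = Sv := by
      have hpt2 : (fun ω => f0 ω * S0 ω) = fun ω => ∑ i, f0 ω * g0 i ω := by
        funext ω; simp only [hS0_def, Finset.mul_sum]
      rw [hpt2, integral_finset_sum Finset.univ
        (fun i _ => my_int_mul hf0 (hg0 i))]
      rw [hSv_def]
      exact Finset.sum_congr rfl fun i _ => horth i
    have hSS : ∫ ω, S0 ω * S0 ω ∂P ≤ (d : ℝ) * Sv := by
      have hrhs : ∫ ω, (d : ℝ) * ∑ i, g0 i ω * g0 i ω ∂P = (d : ℝ) * Sv := by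
        rw [integral_const_mul, integral_finset_sum Finset.univ
          (fun i _ => my_int_mul (hg0 i) (hg0 i))]
      rw [← hrhs]
      refine integral_mono (my_int_mul hS0 hS0)
        (((integrable_finset_sum Finset.univ
          (fun i _ => my_int_mul (hg0 i) (hg0 i)))).const_mul _) fun ω => ?_
      have h := sq_sum_le_card_mul_sum_sq (s := Finset.univ)
        (f := fun i => g0 i ω)
      simp only [Finset.card_univ, Fintype.card_fin] at h
      calc S0 ω * S0 ω = (∑ i, g0 i ω) ^ 2 := by rw [sq]
        _ ≤ (d : ℝ) * ∑ i, g0 i ω ^ 2 := h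
        _ = (d : ℝ) * ∑ i, g0 i ω * g0 i ω := by simp [sq]
    have hexp : variance Gl P
        = lam ^ 2 * V + 2 * lam * c * Sv + c ^ 2 * ∫ ω, S0 ω * S0 ω ∂P := by
      rw [hvarGl]
      have hpt3 : (fun ω => (lam * f0 ω + c * S0 ω) ^ 2)
          = fun ω => (lam ^ 2 * (f0 ω * f0 ω) + 2 * lam * c * (f0 ω * S0 ω))
            + c ^ 2 * (S0 ω * S0 ω) := by
        funext ω; ring
      have iA : Integrable (fun ω => lam ^ 2 * (f0 ω * f0 ω)) P :=
        (my_int_mul hf0 hf0).const_mul _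
      have iB : Integrable (fun ω => 2 * lam * c * (f0 ω * S0 ω)) P :=
        (my_int_mul hf0 hS0).const_mul _
      have iC : Integrable
          (fun ω => lam ^ 2 * (f0 ω * f0 ω) + 2 * lam * c * (f0 ω * S0 ω)) P :=
        iA.add iB
      have iD : Integrable (fun ω => c ^ 2 * (S0 ω * S0 ω)) P :=
        (my_int_mul hS0 hS0).const_mul _
      rw [hpt3, integral_add iC iD, integral_add iA iB,
        integral_const_mul, integral_const_mul, integral_const_mul, hfS, ← hV_def]
    -- put everything together
    rw [hVvar, hexp]
    clear_value m G f0 g0 V v Sv c S0 Gl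
    have hdR : (0:ℝ) < (d:ℝ) := by positivity
    have hc0 : 0 ≤ c := by
      rw [hc_def]
      apply div_nonneg (by linarith) (by positivity)
    have hbound : c ^ 2 * ∫ ω, S0 ω * S0 ω ∂P ≤ c ^ 2 * ((d : ℝ) * Sv) :=
      mul_le_mul_of_nonneg_left hSS (sq_nonneg c)
    have hαV : 0 ≤ α * V := mul_nonneg hα hV0
    have hcd : c * (d : ℝ) = 1 - lam := by
      rw [hc_def]; field_simp
    -- reduce to algebra
    have halg : lam ^ 2 * V + 2 * lam * c * Sv + c ^ 2 * ((d : ℝ) * Sv)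
        ≤ (1 - α * (1 - lam) * (1 + (2 * d - 1) * lam) / d) * V := by
      have h2 : (2 * lam * c + c ^ 2 * (d : ℝ)) * (d : ℝ) = (1 - lam) * (1 + lam) := by
        rw [hc_def]; field_simp; ring
      have hcoef0 : 0 ≤ 2 * lam * c + c ^ 2 * (d : ℝ) := by
        have h3 := mul_nonneg hlam0 hc0
        nlinarith [sq_nonneg c]
      have hSv_le : Sv ≤ (d : ℝ) * V - (d : ℝ) * (α * V) := by linarith
      have step1 : (2 * lam * c + c ^ 2 * (d : ℝ)) * Sv
          ≤ (2 * lam * c + c ^ 2 * (d : ℝ)) * ((d : ℝ) * V - (d : ℝ) * (α * V)) :=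
        mul_le_mul_of_nonneg_left hSv_le hcoef0
      have step2 : (2 * lam * c + c ^ 2 * (d : ℝ)) * ((d : ℝ) * V - (d : ℝ) * (α * V))
          = (1 - lam) * (1 + lam) * (V - α * V) := by
        calc (2 * lam * c + c ^ 2 * (d : ℝ)) * ((d : ℝ) * V - (d : ℝ) * (α * V))
            = ((2 * lam * c + c ^ 2 * (d : ℝ)) * (d : ℝ)) * (V - α * V) := by ring
          _ = (1 - lam) * (1 + lam) * (V - α * V) := by rw [h2]
      have hfrac : (1 - lam) * (1 + (2 * d - 1) * lam) / d ≤ (1 - lam) * (1 + lam) := by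
        rw [div_le_iff₀ hdR]
        nlinarith [mul_nonneg (mul_nonneg (sub_nonneg.2 hlam1) (sub_nonneg.2 hlam1))
          (sub_nonneg.2 hd1)]
      have final : (α * V) * ((1 - lam) * (1 + (2 * d - 1) * lam) / d)
          ≤ (α * V) * ((1 - lam) * (1 + lam)) :=
        mul_le_mul_of_nonneg_left hfrac hαV
      calc lam ^ 2 * V + 2 * lam * c * Sv + c ^ 2 * ((d : ℝ) * Sv)
          = lam ^ 2 * V + (2 * lam * c + c ^ 2 * (d : ℝ)) * Sv := by ring
        _ ≤ lam ^ 2 * V + (1 - lam) * (1 + lam) * (V - α * V) := by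
            linarith [step1, step2]
        _ = V - (α * V) * ((1 - lam) * (1 + lam)) := by ring
        _ ≤ V - (α * V) * ((1 - lam) * (1 + (2 * d - 1) * lam) / d) := by
            linarith [final]
        _ = (1 - α * (1 - lam) * (1 + (2 * d - 1) * lam) / d) * V := by ring
    calc lam ^ 2 * V + 2 * lam * c * Sv + c ^ 2 * ∫ ω, S0 ω * S0 ω ∂P
        ≤ lam ^ 2 * V + 2 * lam * c * Sv + c ^ 2 * ((d : ℝ) * Sv) := by linarith
      _ ≤ (1 - α * (1 - lam) * (1 + (2 * d - 1) * lam) / d) * V := halg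
  · -- minimization claim: pure algebra
    intro lam hlam0 hlam1
    have h2d : (0:ℝ) < 2 * (d : ℝ) - 1 := by nlinarith
    have hdpos : (0:ℝ) < (d : ℝ) := by positivity
    set μ : ℝ := ((d : ℝ) - 1) / (2 * d - 1) with hμ_def
    have hμ1 : (2 * (d:ℝ) - 1) * μ = (d:ℝ) - 1 := by
      rw [hμ_def]; field_simp
    have key : (1 - lam) * (1 + (2 * d - 1) * lam) ≤ (1 - μ) * (1 + (2 * d - 1) * μ) := by
      have h1mu : 1 - μ = (d : ℝ) / (2 * d - 1) := by
        rw [hμ_def, eq_div_iff h2d.ne', sub_mul, div_mul_cancel₀ _ h2d.ne']; ring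
      rw [hμ1, h1mu]
      rw [show (1 : ℝ) + ((d:ℝ) - 1) = (d:ℝ) by ring]
      rw [div_mul_eq_mul_div, le_div_iff₀ h2d]
      nlinarith [sq_nonneg ((d : ℝ) - 1 - (2 * d - 1) * lam)]
    have h2 : α * (1 - lam) * (1 + (2 * d - 1) * lam)
        ≤ α * (1 - μ) * (1 + (2 * d - 1) * μ) := by
      calc α * (1 - lam) * (1 + (2 * d - 1) * lam)
          = α * ((1 - lam) * (1 + (2 * d - 1) * lam)) := by ring
        _ ≤ α * ((1 - μ) * (1 + (2 * d - 1) * μ)) := mul_le_mul_of_nonneg_left key hα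
        _ = α * (1 - μ) * (1 + (2 * d - 1) * μ) := by ring
    have h3 : α * (1 - lam) * (1 + (2 * d - 1) * lam) / d
        ≤ α * (1 - μ) * (1 + (2 * d - 1) * μ) / d := by
      rw [div_le_div_iff₀ hdpos hdpos]
      nlinarith [h2]
    linarith
end

section
/- Let f be a probability density function on [0,∞) with finite mean m > 0, f_{(2)|2} the density of the maximum of two i.i.d. draws from f, f_{(1)|(n+1)} the density of the minimum of n+1 i.i.d. draws from f (n ≥ 1). Then the operator T(f) := f_{(2)|2}/2 + (f ∗ f ∗ f_{(1)|(n+1)})/2 strictly increases the mean: the mean of T(f) is strictly greater than m. Consequently, no density with finite positive mean is a fixed point of T. -/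
open MeasureTheory

/-- Convolution of two functions supported on `[0,∞)`. -/
noncomputable def convNN (f g : ℝ → ℝ) (t : ℝ) : ℝ :=
  ∫ u in Set.Icc 0 t, f u * g (t - u)

/-- The c.d.f. associated with a density `f`. -/
noncomputable def cdfOf (f : ℝ → ℝ) (t : ℝ) : ℝ := ∫ u in Set.Iic t, f u

/-- Density of the maximum of two i.i.d. draws from `f`. -/
noncomputable def maxDensity2 (f : ℝ → ℝ) (t : ℝ) : ℝ := 2 * f t * cdfOf f t

/-- Density of the minimum of `n+1` i.i.d. draws from `f`. -/
noncomputable def minDensity (f : ℝ → ℝ) (n : ℕ) (t : ℝ) : ℝ :=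
  (n + 1) * f t * (1 - cdfOf f t) ^ n

/-- The operator `T(f) = f_{(2)|2}/2 + (f ∗ f ∗ f_{(1)|(n+1)})/2`. -/
noncomputable def opT (f : ℝ → ℝ) (n : ℕ) (t : ℝ) : ℝ :=
  maxDensity2 f t / 2 + convNN f (convNN f (minDensity f n)) t / 2

namespace OpTAux

open Set Filter Topology
open scoped Convolution

noncomputable def muf (f : ℝ → ℝ) : Measure ℝ :=
  (volume : Measure ℝ).withDensity fun x => ENNReal.ofReal (f x)

variable {f : ℝ → ℝ}

lemma int_f (hnn : ∀ x, 0 ≤ f x) (hint : ∫ x, f x = 1) : Integrable f := by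
  by_contra h
  rw [integral_undef h] at hint
  norm_num at hint

lemma F_mono (hf : Integrable f) (hnn : ∀ x, 0 ≤ f x) : Monotone (cdfOf f) := by
  intro a b hab
  exact setIntegral_mono_set hf.integrableOn (Filter.Eventually.of_forall hnn)
    (HasSubset.Subset.eventuallyLE (Set.Iic_subset_Iic.2 hab))

lemma F_meas (hf : Integrable f) (hnn : ∀ x, 0 ≤ f x) : Measurable (cdfOf f) :=
  (F_mono hf hnn).measurable

lemma F_nonneg (hnn : ∀ x, 0 ≤ f x) (t : ℝ) : 0 ≤ cdfOf f t :=
  setIntegral_nonneg measurableSet_Iic fun x _ => hnn x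

lemma F_le_one (hf : Integrable f) (hnn : ∀ x, 0 ≤ f x) (hint : ∫ x, f x = 1) (t : ℝ) :
    cdfOf f t ≤ 1 := by
  rw [← hint]
  exact setIntegral_le_integral hf (Filter.Eventually.of_forall hnn)

lemma muf_Iic (hf : Integrable f) (hnn : ∀ x, 0 ≤ f x) (t : ℝ) :
    muf f (Set.Iic t) = ENNReal.ofReal (cdfOf f t) := by
  rw [muf, withDensity_apply _ measurableSet_Iic, cdfOf,
    ofReal_integral_eq_lintegral_ofReal hf.integrableOn
      (Filter.Eventually.of_forall hnn)]

lemma muf_univ (hf : Integrable f) (hnn : ∀ x, 0 ≤ f x) (hint : ∫ x, f x = 1) :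
    muf f Set.univ = 1 := by
  rw [muf, withDensity_apply _ MeasurableSet.univ, Measure.restrict_univ,
    ← ofReal_integral_eq_lintegral_ofReal hf (Filter.Eventually.of_forall hnn), hint,
    ENNReal.ofReal_one]

lemma muf_singleton (x : ℝ) : muf f {x} = 0 := by
  rw [muf, withDensity_apply _ (measurableSet_singleton x),
    Measure.restrict_eq_zero.mpr (measure_singleton x), lintegral_zero_measure]


lemma measure_cdf_le (hf : Integrable f) (hnn : ∀ x, 0 ≤ f x) (hint : ∫ x, f x = 1)
    {c : ℝ} (hc0 : 0 < c) (hc1 : c < 1) :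
    muf f {a | cdfOf f a ≤ c} = ENNReal.ofReal c := by
  set F := cdfOf f with hFdef
  set A : Set ℝ := {a | F a ≤ c} with hA
  -- A is nonempty
  have hAne : A.Nonempty := by
    have htend : Tendsto (fun k : ℕ => muf f (Iic (-(k : ℝ)))) atTop
        (𝓝 (muf f (⋂ k : ℕ, Iic (-(k : ℝ))))) := by
      apply tendsto_measure_iInter_atTop
      · exact fun k => measurableSet_Iic.nullMeasurableSet
      · intro i j hij
        exact Iic_subset_Iic.2 (by exact_mod_cast neg_le_neg (Nat.cast_le.2 hij))
      · exact ⟨0, by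
          have := muf_univ hf hnn hint
          exact ne_top_of_le_ne_top (by simp [this]) (measure_mono (subset_univ _))⟩
    have hempty : (⋂ k : ℕ, Iic (-(k : ℝ))) = ∅ := by
      ext x
      simp only [mem_iInter, mem_Iic, mem_empty_iff_false, iff_false, not_forall, not_le]
      obtain ⟨k, hk⟩ := exists_nat_gt (-x)
      exact ⟨k, by linarith⟩
    rw [hempty] at htend
    simp only [measure_empty] at htend
    have : ∀ᶠ k : ℕ in atTop, muf f (Iic (-(k : ℝ))) < ENNReal.ofReal c := by
      refine htend.eventually (eventually_lt_nhds ?_)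
      simpa using hc0
    obtain ⟨k, hk⟩ := this.exists
    refine ⟨-(k : ℝ), ?_⟩
    rw [muf_Iic hf hnn] at hk
    have := (ENNReal.ofReal_lt_ofReal_iff hc0).mp hk
    exact le_of_lt this
  -- A is bounded above
  have hbdd : BddAbove A := by
    have htend := tendsto_measure_Iic_atTop (muf f)
    rw [muf_univ hf hnn hint] at htend
    have : ∀ᶠ b : ℝ in atTop, ENNReal.ofReal c < muf f (Iic b) := by
      refine htend.eventually (eventually_gt_nhds ?_)
      exact ENNReal.ofReal_lt_one.2 hc1
    obtain ⟨b, hb⟩ := this.exists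
    rw [muf_Iic hf hnn] at hb
    have hcb : c < F b := by
      by_contra hcon
      push_neg at hcon
      exact absurd (ENNReal.ofReal_le_ofReal hcon) (not_le.2 hb)
    refine ⟨b, fun a ha => ?_⟩
    by_contra hab
    push_neg at hab
    exact absurd (le_trans (F_mono hf hnn hab.le) ha) (not_le.2 hcb)
  set q := sSup A with hq
  -- F q ≤ c
  have hIio : muf f (Set.Iio q) ≤ ENNReal.ofReal c := by
    have hunion : Set.Iio q = ⋃ k : ℕ, Iic (q - 1 / (k + 1)) := by
      ext x
      simp only [mem_Iio, mem_iUnion, mem_Iic]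
      constructor
      · intro hx
        obtain ⟨k, hk⟩ := exists_nat_one_div_lt (sub_pos.2 hx)
        exact ⟨k, by push_cast at hk ⊢; linarith⟩
      · rintro ⟨k, hk⟩
        have : (0:ℝ) < 1 / ((k:ℝ) + 1) := by positivity
        linarith
    rw [hunion]
    have hmono : Monotone fun k : ℕ => Iic (q - 1 / ((k:ℝ) + 1)) := by
      intro i j hij
      apply Iic_subset_Iic.2
      have : (1:ℝ) / ((j:ℝ)+1) ≤ 1 / ((i:ℝ)+1) := by
        apply one_div_le_one_div_of_le (by positivity)
        exact_mod_cast Nat.add_le_add_right hij 1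
      linarith
    have htu := tendsto_measure_iUnion_atTop (μ := muf f) hmono
    refine le_of_tendsto htu (Filter.Eventually.of_forall fun k => ?_)
    simp only [Function.comp]
    rw [muf_Iic hf hnn]
    apply ENNReal.ofReal_le_ofReal
    have hlt : q - 1 / ((k:ℝ) + 1) < q := by
      have : (0:ℝ) < 1 / ((k:ℝ) + 1) := by positivity
      linarith
    obtain ⟨a, haA, hla⟩ := exists_lt_of_lt_csSup hAne hlt
    exact le_trans (F_mono hf hnn hla.le) haA
  have hFqle : F q ≤ c := by
    have h1 : muf f (Set.Iic q) ≤ ENNReal.ofReal c := by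
      have : Set.Iic q ⊆ Set.Iio q ∪ {q} := by
        intro x hx
        rcases lt_or_eq_of_le (mem_Iic.1 hx) with h | h
        · exact Or.inl h
        · exact Or.inr (by simp [h])
      calc muf f (Set.Iic q) ≤ muf f (Set.Iio q ∪ {q}) := measure_mono this
        _ ≤ muf f (Set.Iio q) + muf f {q} := measure_union_le _ _
        _ = muf f (Set.Iio q) := by rw [muf_singleton]; simp
        _ ≤ ENNReal.ofReal c := hIio
    rw [muf_Iic hf hnn] at h1
    exact (ENNReal.ofReal_le_ofReal_iff hc0.le).1 h1
  -- F q ≥ c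
  have hFqge : c ≤ F q := by
    have htend : Tendsto (fun k : ℕ => muf f (Iic (q + 1 / ((k:ℝ) + 1)))) atTop
        (𝓝 (muf f (⋂ k : ℕ, Iic (q + 1 / ((k:ℝ) + 1))))) := by
      apply tendsto_measure_iInter_atTop
      · exact fun k => measurableSet_Iic.nullMeasurableSet
      · intro i j hij
        apply Iic_subset_Iic.2
        have : (1:ℝ) / ((j:ℝ)+1) ≤ 1 / ((i:ℝ)+1) := by
          apply one_div_le_one_div_of_le (by positivity)
          exact_mod_cast Nat.add_le_add_right hij 1
        linarith
      · refine ⟨0, ?_⟩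
        exact ne_top_of_le_ne_top (by simp [muf_univ hf hnn hint])
          (measure_mono (subset_univ _))
    have hinter : (⋂ k : ℕ, Iic (q + 1 / ((k:ℝ) + 1))) = Iic q := by
      ext x
      simp only [mem_iInter, mem_Iic]
      constructor
      · intro hx
        by_contra hxq
        push_neg at hxq
        obtain ⟨k, hk⟩ := exists_nat_one_div_lt (sub_pos.2 hxq)
        have := hx k
        push_cast at hk
        linarith
      · intro hx k
        have : (0:ℝ) < 1 / ((k:ℝ)+1) := by positivity
        linarith
    rw [hinter] at htend
    have hterm : ∀ k : ℕ, ENNReal.ofReal c ≤ muf f (Iic (q + 1 / ((k:ℝ) + 1))) := by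
      intro k
      rw [muf_Iic hf hnn]
      apply ENNReal.ofReal_le_ofReal
      have hgt : q < q + 1 / ((k:ℝ) + 1) := by
        have : (0:ℝ) < 1 / ((k:ℝ)+1) := by positivity
        linarith
      have hnotA : q + 1 / ((k:ℝ) + 1) ∉ A := fun hmem =>
        absurd (le_csSup hbdd hmem) (not_le.2 hgt)
      exact le_of_not_ge hnotA
    have h2 := ge_of_tendsto htend (Filter.Eventually.of_forall hterm)
    rw [muf_Iic hf hnn] at h2
    exact (ENNReal.ofReal_le_ofReal_iff (F_nonneg hnn q)).1 h2
  have hAq : A = Set.Iic q := by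
    ext a
    constructor
    · intro ha
      exact le_csSup hbdd ha
    · intro ha
      exact le_trans (F_mono hf hnn ha) hFqle
  rw [hA] at hAq ⊢
  rw [hAq, muf_Iic hf hnn]
  rw [show cdfOf f q = F q from rfl, le_antisymm hFqle hFqge]


lemma key_integral (hmeas : Measurable f) (hf : Integrable f) (hnn : ∀ x, 0 ≤ f x)
    (hint : ∫ x, f x = 1) {n : ℕ} (hn : 1 ≤ n) :
    ∫ x, f x * (1 - cdfOf f x) ^ n = 1 / (n + 1) := by
  set F := cdfOf f with hFdef
  have hFm : Measurable F := F_meas hf hnn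
  have h1F : ∀ x, 0 ≤ 1 - F x := fun x => sub_nonneg.2 (F_le_one hf hnn hint x)
  have h1F1 : ∀ x, 1 - F x ≤ 1 := fun x => by
    have := F_nonneg hnn x; linarith
  -- integrability of the integrand
  have hintg : Integrable fun x => f x * (1 - F x) ^ n := by
    refine Integrable.mono hf ((hmeas.mul (((measurable_const.sub hFm).pow_const n))).aestronglyMeasurable) ?_
    refine Filter.Eventually.of_forall fun x => ?_
    rw [Real.norm_eq_abs, Real.norm_eq_abs, abs_of_nonneg (hnn x),
      abs_of_nonneg (mul_nonneg (hnn x) (pow_nonneg (h1F x) n))]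
    calc f x * (1 - F x) ^ n ≤ f x * 1 := by
          apply mul_le_mul_of_nonneg_left _ (hnn x)
          exact pow_le_one₀ (h1F x) (h1F1 x)
      _ = f x := mul_one _
  -- Step: lintegral over muf equals ofReal of the real integral
  have hof : ENNReal.ofReal (∫ x, f x * (1 - F x) ^ n) =
      ∫⁻ x, ENNReal.ofReal ((1 - F x) ^ n) ∂(muf f) := by
    rw [ofReal_integral_eq_lintegral_ofReal hintg
      (Filter.Eventually.of_forall fun x => mul_nonneg (hnn x) (pow_nonneg (h1F x) n))]
    rw [muf, lintegral_withDensity_eq_lintegral_mul _ (hmeas.ennreal_ofReal)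
      (show Measurable fun x => ENNReal.ofReal ((1 - F x) ^ n) from
        ((measurable_const.sub hFm).pow_const n).ennreal_ofReal)]
    congr 1
    ext x
    simp only [Pi.mul_apply]
    rw [← ENNReal.ofReal_mul (hnn x)]
  -- layer cake
  have hlc := lintegral_comp_eq_lintegral_meas_le_mul (muf f)
    (f := fun x => 1 - F x) (g := fun t => n * t ^ (n - 1))
    (Filter.Eventually.of_forall h1F)
    ((measurable_const.sub hFm).aemeasurable)
    (fun t _ => (intervalIntegral.intervalIntegrable_pow (n-1)).const_mul _)
    ((ae_restrict_iff' measurableSet_Ioi).2 (Filter.Eventually.of_forall fun t ht => by have : (0:ℝ) < t := ht; positivity))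
  -- simplify the inner interval integral
  have hG : ∀ s : ℝ, 0 ≤ s → (∫ t in (0:ℝ)..s, (n:ℝ) * t ^ (n - 1)) = s ^ n := by
    intro s _
    rw [intervalIntegral.integral_const_mul, integral_pow]
    have hnn1 : n - 1 + 1 = n := Nat.succ_pred_eq_of_pos hn
    rw [hnn1, zero_pow (by omega : n ≠ 0)]
    have hn0 : (n : ℝ) ≠ 0 := (Nat.cast_pos.mpr hn).ne'
    field_simp
    rw [Nat.cast_sub hn, Nat.cast_one]
    ring
  have hlhs : (∫⁻ ω, ENNReal.ofReal (∫ t in (0:ℝ)..(1 - F ω), (n:ℝ) * t ^ (n - 1)) ∂(muf f))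
      = ∫⁻ x, ENNReal.ofReal ((1 - F x) ^ n) ∂(muf f) := by
    apply lintegral_congr
    intro ω
    rw [hG _ (h1F ω)]
  -- evaluate the right-hand side
  have hrhs : (∫⁻ t in Ioi (0:ℝ), muf f {a | t ≤ 1 - F a} * ENNReal.ofReal ((n:ℝ) * t ^ (n - 1)))
      = ENNReal.ofReal (1 / (n + 1)) := by
    have h1ae : ∀ᵐ t : ℝ ∂(volume.restrict (Ioi 0)), t ≠ 1 := by
      apply ae_restrict_of_ae
      rw [ae_iff]
      have : {t : ℝ | ¬ t ≠ 1} = {1} := by ext t; simp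
      rw [this]
      exact measure_singleton 1
    have hcongr : (fun t => muf f {a | t ≤ 1 - F a} * ENNReal.ofReal ((n:ℝ) * t ^ (n - 1)))
        =ᵐ[volume.restrict (Ioi 0)]
        (Ioo (0:ℝ) 1).indicator fun t => ENNReal.ofReal ((1 - t) * ((n:ℝ) * t ^ (n - 1))) := by
      filter_upwards [h1ae, ae_restrict_mem measurableSet_Ioi] with t ht1 ht0
      have hset : {a : ℝ | t ≤ 1 - F a} = {a | F a ≤ 1 - t} := by
        ext a; simp only [mem_setOf_eq]; constructor <;> intro <;> linarith
      rcases lt_or_gt_of_ne ht1 with hlt | hgt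
      · have htmem : t ∈ Ioo (0:ℝ) 1 := ⟨ht0, hlt⟩
        rw [indicator_of_mem htmem, hset, measure_cdf_le hf hnn hint (by linarith) (by
          have : (0:ℝ) < t := ht0; linarith)]
        rw [← ENNReal.ofReal_mul (by linarith)]
      · have htne : t ∉ Ioo (0:ℝ) 1 := fun hmem => absurd hmem.2 (not_lt.2 hgt.le)
        rw [indicator_of_notMem htne, hset]
        have hempty : {a : ℝ | F a ≤ 1 - t} = ∅ := by
          ext a
          simp only [mem_setOf_eq, mem_empty_iff_false, iff_false, not_le]
          have := F_nonneg hnn a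
          linarith
        rw [hempty, measure_empty, zero_mul]
    rw [lintegral_congr_ae hcongr, lintegral_indicator measurableSet_Ioo,
      Measure.restrict_restrict measurableSet_Ioo,
      inter_eq_left.2 (fun x hx => hx.1)]
    have hcont : Continuous fun t : ℝ => (1 - t) * ((n:ℝ) * t ^ (n - 1)) :=
      (continuous_const.sub continuous_id).mul (continuous_const.mul (continuous_pow _))
    have hintOn : IntegrableOn (fun t : ℝ => (1 - t) * ((n:ℝ) * t ^ (n - 1))) (Ioo 0 1) :=
      (hcont.integrableOn_Icc (a := 0) (b := 1)).mono_set Ioo_subset_Icc_self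
    rw [← ofReal_integral_eq_lintegral_ofReal hintOn
      ((ae_restrict_iff' measurableSet_Ioo).2 (Filter.Eventually.of_forall fun t ht => by
        have h1 : (0:ℝ) < t := ht.1
        have h2 : t < 1 := ht.2
        have : (0:ℝ) ≤ 1 - t := by linarith
        positivity))]
    congr 1
    rw [← integral_Ioc_eq_integral_Ioo, ← intervalIntegral.integral_of_le zero_le_one]
    have hexp : ∀ t : ℝ, (1 - t) * ((n:ℝ) * t ^ (n - 1)) = (n:ℝ) * t ^ (n-1) - (n:ℝ) * t ^ n := by
      intro t
      have ht : t ^ n = t ^ (n - 1) * t := by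
        rw [← pow_succ, Nat.sub_add_cancel hn]
      rw [ht]; ring
    rw [intervalIntegral.integral_congr (g := fun t => (n:ℝ) * t ^ (n-1) - (n:ℝ) * t ^ n)
      (fun t _ => hexp t)]
    rw [intervalIntegral.integral_sub
      ((intervalIntegral.intervalIntegrable_pow (n-1)).const_mul _)
      ((intervalIntegral.intervalIntegrable_pow n).const_mul _),
      intervalIntegral.integral_const_mul, intervalIntegral.integral_const_mul,
      integral_pow, integral_pow]
    have hnn1 : n - 1 + 1 = n := Nat.succ_pred_eq_of_pos hn
    rw [hnn1, one_pow, one_pow, zero_pow (by omega : n ≠ 0), zero_pow (by omega : n + 1 ≠ 0)]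
    have hn0 : (n : ℝ) ≠ 0 := (Nat.cast_pos.mpr hn).ne'
    have hn1 : (n : ℝ) + 1 ≠ 0 := by positivity
    push_cast
    field_simp
    rw [Nat.cast_sub hn, Nat.cast_one]
    ring
  have hfinal : ENNReal.ofReal (∫ x, f x * (1 - F x) ^ n) = ENNReal.ofReal (1 / (n + 1)) := by
    rw [hof, ← hlhs, hlc, hrhs]
  have hnonneg : 0 ≤ ∫ x, f x * (1 - F x) ^ n :=
    integral_nonneg fun x => mul_nonneg (hnn x) (pow_nonneg (h1F x) n)
  have := congrArg ENNReal.toReal hfinal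
  rw [ENNReal.toReal_ofReal hnonneg, ENNReal.toReal_ofReal (by positivity)] at this
  exact_mod_cast this


lemma convNN_eq (f g : ℝ → ℝ) (hfs : ∀ x, x < 0 → f x = 0) (hgs : ∀ x, x < 0 → g x = 0)
    (x : ℝ) : convNN f g x = (f ⋆[ContinuousLinearMap.mul ℝ ℝ] g) x := by
  rw [convNN, convolution_def]
  simp only [ContinuousLinearMap.mul_apply']
  apply setIntegral_eq_integral_of_forall_compl_eq_zero
  intro u hu
  rcases not_and_or.1 hu with h | h
  · rw [hfs u (not_le.1 h), zero_mul]
  · rw [hgs (x - u) (by have := not_le.1 h; linarith), mul_zero]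

theorem conv_props {f g : ℝ → ℝ}
    (hfnn : ∀ x, 0 ≤ f x) (hgnn : ∀ x, 0 ≤ g x)
    (hfs : ∀ x, x < 0 → f x = 0) (hgs : ∀ x, x < 0 → g x = 0)
    (hfi : Integrable f) (hgi : Integrable g)
    (hfx : Integrable (fun x => x * f x)) (hgx : Integrable (fun x => x * g x)) :
    (∀ x, 0 ≤ convNN f g x) ∧ (∀ x, x < 0 → convNN f g x = 0) ∧
    Integrable (convNN f g) ∧ ((∫ x, convNN f g x) = (∫ x, f x) * (∫ x, g x)) ∧
    Integrable (fun x => x * convNN f g x) ∧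
    ((∫ x, x * convNN f g x) =
      (∫ x, f x) * (∫ x, x * g x) + (∫ x, g x) * (∫ x, x * f x)) := by
  set L : ℝ →L[ℝ] ℝ →L[ℝ] ℝ := ContinuousLinearMap.mul ℝ ℝ with hL
  have hconv : ∀ x, convNN f g x = (f ⋆[L] g) x := convNN_eq f g hfs hgs
  have hnn : ∀ x, 0 ≤ convNN f g x := fun x =>
    setIntegral_nonneg measurableSet_Icc fun u _ => mul_nonneg (hfnn u) (hgnn (x - u))
  have hzero : ∀ x, x < 0 → convNN f g x = 0 := by
    intro x hx
    rw [convNN, Set.Icc_eq_empty (not_le.2 hx)]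
    simp
  have hci : Integrable (convNN f g) := by
    rw [funext hconv]
    exact hfi.integrable_convolution L hgi
  have hcint : (∫ x, convNN f g x) = (∫ x, f x) * (∫ x, g x) := by
    rw [funext hconv, integral_convolution L hfi hgi]
    simp [hL]
  -- moments
  set f1 : ℝ → ℝ := fun u => u * f u with hf1
  set g1 : ℝ → ℝ := fun v => v * g v with hg1
  have hae : ∀ᵐ x : ℝ, x * convNN f g x = (f1 ⋆[L] g) x + (f ⋆[L] g1) x := by
    filter_upwards [hfx.ae_convolution_exists L hgi, hfi.ae_convolution_exists L hgx] with x h1 h2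
    have h1' : Integrable (fun u => f1 u * g (x - u)) := by
      simpa [hL, ContinuousLinearMap.mul_apply'] using h1.integrable
    have h2' : Integrable (fun u => f u * g1 (x - u)) := by
      simpa [hL, ContinuousLinearMap.mul_apply'] using h2.integrable
    rw [hconv x, convolution_def, convolution_def, convolution_def]
    simp only [hL, ContinuousLinearMap.mul_apply']
    rw [← integral_const_mul, ← integral_add h1' h2']
    congr 1
    ext u
    simp only [hf1, hg1]
    ring
  have hmint : Integrable (fun x => x * convNN f g x) := by
    apply Integrable.congr (Integrable.add (hfx.integrable_convolution L hgi)
      (hfi.integrable_convolution L hgx)) (hae.mono fun x hx => hx.symm)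
  refine ⟨hnn, hzero, hci, hcint, hmint, ?_⟩
  rw [integral_congr_ae hae, integral_add (hfx.integrable_convolution L hgi)
      (hfi.integrable_convolution L hgx), integral_convolution L hfx hgi,
      integral_convolution L hfi hgx]
  simp only [ContinuousLinearMap.mul_apply', hL]
  ring


lemma xfF_nonneg (hnn : ∀ x, 0 ≤ f x) (hsupp : ∀ x, x < 0 → f x = 0) :
    ∀ x, 0 ≤ x * f x * cdfOf f x := by
  intro x
  rcases lt_or_ge x 0 with hx | hx
  · rw [hsupp x hx]; ring_nf; exact le_refl 0
  · exact mul_nonneg (mul_nonneg hx (hnn x)) (F_nonneg hnn x)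

lemma xfF_integrable (hmeas : Measurable f) (hf : Integrable f) (hnn : ∀ x, 0 ≤ f x)
    (hint : ∫ x, f x = 1) (hsupp : ∀ x, x < 0 → f x = 0)
    (hmom : Integrable (fun x => x * f x)) :
    Integrable (fun x => x * f x * cdfOf f x) := by
  refine hmom.mono ((measurable_id.mul hmeas).mul (F_meas hf hnn)).aestronglyMeasurable
    (Filter.Eventually.of_forall fun x => ?_)
  rw [Real.norm_eq_abs, Real.norm_eq_abs, abs_mul]
  calc |x * f x| * |cdfOf f x| ≤ |x * f x| * 1 := by
        apply mul_le_mul_of_nonneg_left _ (abs_nonneg _)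
        rw [abs_of_nonneg (F_nonneg hnn x)]
        exact F_le_one hf hnn hint x
    _ = |x * f x| := mul_one _

lemma xfF_pos (hmeas : Measurable f) (hf : Integrable f) (hnn : ∀ x, 0 ≤ f x)
    (hint : ∫ x, f x = 1) (hsupp : ∀ x, x < 0 → f x = 0)
    (hmom : Integrable (fun x => x * f x)) (hmpos : 0 < ∫ x, x * f x) :
    0 < ∫ x, x * f x * cdfOf f x := by
  set F := cdfOf f with hF
  have hFm : Measurable F := F_meas hf hnn
  rw [integral_pos_iff_support_of_nonneg (xfF_nonneg hnn hsupp)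
    (xfF_integrable hmeas hf hnn hint hsupp hmom)]
  by_contra hcon
  push_neg at hcon
  have hsupp0 : volume (Function.support fun x => x * f x * F x) = 0 := le_antisymm hcon zero_le
  -- the support of x * f x has positive measure
  have hxf_nonneg : ∀ x, 0 ≤ x * f x := by
    intro x
    rcases lt_or_ge x 0 with hx | hx
    · rw [hsupp x hx, mul_zero]
    · exact mul_nonneg hx (hnn x)
  have hxfpos : 0 < volume (Function.support fun x => x * f x) :=
    (integral_pos_iff_support_of_nonneg hxf_nonneg hmom).1 hmpos
  -- W : where x * f x ≠ 0 but F x = 0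
  set W : Set ℝ := {x | x * f x ≠ 0 ∧ F x = 0} with hW
  have hWmeas : MeasurableSet W := by
    have h1 : MeasurableSet {x : ℝ | x * f x ≠ 0} :=
      (measurable_id.mul hmeas) (measurableSet_singleton 0).compl
    have h2 : MeasurableSet {x : ℝ | F x = 0} := hFm (measurableSet_singleton 0)
    exact h1.inter h2
  -- W has positive measure
  have hWpos : 0 < volume W := by
    have hsub : (Function.support fun x => x * f x) ⊆
        (Function.support fun x => x * f x * F x) ∪ W := by
      intro x hx
      rcases eq_or_ne (x * f x * F x) 0 with h0 | h0
      · right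
        refine ⟨hx, ?_⟩
        rcases mul_eq_zero.1 h0 with h | h
        · exact absurd h hx
        · exact h
      · exact Or.inl h0
    by_contra hc
    push_neg at hc
    have hW0 : volume W = 0 := le_antisymm hc zero_le
    have hle : volume (Function.support fun x => x * f x) ≤
        volume ((Function.support fun x => x * f x * F x) ∪ W) := measure_mono hsub
    rw [measure_union_null hsupp0 hW0] at hle
    exact absurd (lt_of_lt_of_le hxfpos hle) (lt_irrefl 0)
  -- W consists of positive reals
  have hWsub : W ⊆ Ioi (0:ℝ) := by
    intro x hx
    rcases lt_trichotomy x 0 with h | h | h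
    · exact absurd (by rw [hsupp x h, mul_zero]) hx.1
    · exact absurd (by rw [h, zero_mul]) hx.1
    · exact h
  -- find a bounded piece of W with positive measure
  have hkex : ∃ k : ℕ, volume (W ∩ Iic (k:ℝ)) ≠ 0 := by
    by_contra hc
    push_neg at hc
    have : volume W = 0 := by
      have hcover : W = ⋃ k : ℕ, W ∩ Iic (k:ℝ) := by
        ext x
        simp only [mem_iUnion, mem_inter_iff, mem_Iic]
        constructor
        · intro hx
          obtain ⟨k, hk⟩ := exists_nat_ge x
          exact ⟨k, hx, hk⟩
        · rintro ⟨k, hk, _⟩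
          exact hk
      rw [hcover]
      exact measure_iUnion_null hc
    exact absurd (lt_of_lt_of_le hWpos this.le) (lt_irrefl 0)
  obtain ⟨k₀, hk₀⟩ := hkex
  set W' : Set ℝ := W ∩ Iic (k₀:ℝ) with hW'
  have hW'pos : 0 < volume W' := hk₀.bot_lt
  have hW'subW : W' ⊆ W := inter_subset_left
  -- key : points of W' kill the measure below them
  have key : ∀ x ∈ W', volume (W' ∩ Iic x) = 0 := by
    intro x hx
    have hFx : F x = 0 := (hW'subW hx).2
    have hint0 : ∫ u in Iic x, f u = 0 := hFx
    have hae0 : f =ᵐ[volume.restrict (Iic x)] 0 :=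
      (integral_eq_zero_iff_of_nonneg (fun u => hnn u) hf.integrableOn).1 hint0
    have hnull : volume ({u : ℝ | f u ≠ 0} ∩ Iic x) = 0 := by
      have h1 := ae_iff.1 hae0
      simp only [Pi.zero_apply] at h1
      have hms : MeasurableSet {a : ℝ | ¬ f a = 0} :=
        (hmeas (measurableSet_singleton 0)).compl
      rw [Measure.restrict_apply hms] at h1
      exact h1
    apply measure_mono_null _ hnull
    intro u hu
    refine ⟨?_, hu.2⟩
    have := (hW'subW hu.1).1
    intro hfu
    exact this (by rw [hfu, mul_zero])
  -- derive a contradiction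
  set B : Set ℝ := {t | 0 < volume (W' ∩ Iic t)} with hB
  have hBne : (k₀:ℝ) ∈ B := by
    have : W' ∩ Iic (k₀:ℝ) = W' := by
      rw [hW', inter_assoc, inter_self]
    rw [hB, mem_setOf_eq, this]
    exact hW'pos
  obtain ⟨x₀, hx₀⟩ : W'.Nonempty := nonempty_of_measure_ne_zero hW'pos.ne'
  have hBbdd : BddBelow B := by
    refine ⟨x₀, fun t ht => ?_⟩
    by_contra hc
    push_neg at hc
    have : volume (W' ∩ Iic t) ≤ volume (W' ∩ Iic x₀) :=
      measure_mono (inter_subset_inter_right _ (Iic_subset_Iic.2 hc.le))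
    rw [key x₀ hx₀] at this
    exact absurd (lt_of_lt_of_le ht this) (lt_irrefl 0)
  set q := sInf B with hq
  have hIio0 : volume (W' ∩ Iio q) = 0 := by
    have hcover : W' ∩ Iio q = ⋃ k : ℕ, W' ∩ Iic (q - 1 / ((k:ℝ) + 1)) := by
      ext x
      simp only [mem_iUnion, mem_inter_iff, mem_Iio, mem_Iic]
      constructor
      · rintro ⟨hxW, hxq⟩
        obtain ⟨k, hk⟩ := exists_nat_one_div_lt (sub_pos.2 hxq)
        exact ⟨k, hxW, by linarith⟩
      · rintro ⟨k, hxW, hk⟩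
        have : (0:ℝ) < 1 / ((k:ℝ) + 1) := by positivity
        exact ⟨hxW, by linarith⟩
    rw [hcover]
    apply measure_iUnion_null
    intro k
    have hnotB : q - 1 / ((k:ℝ) + 1) ∉ B := by
      intro hmem
      have := csInf_le hBbdd hmem
      have hpos : (0:ℝ) < 1 / ((k:ℝ) + 1) := by positivity
      rw [← hq] at this
      linarith
    rw [hB, mem_setOf_eq, not_lt] at hnotB
    exact le_antisymm hnotB zero_le
  have hIic0 : volume (W' ∩ Iic q) = 0 := by
    have hnull2 : volume ((W' ∩ Iio q) ∪ {q}) = 0 :=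
      measure_union_null hIio0 (measure_singleton q)
    refine measure_mono_null ?_ hnull2
    rintro x ⟨hx1, hx2⟩
    rcases lt_or_eq_of_le (mem_Iic.1 hx2) with h | h
    · exact Or.inl ⟨hx1, h⟩
    · exact Or.inr (by simp [h])
  have hIoipos : 0 < volume (W' ∩ Ioi q) := by
    have hsplit : W' ⊆ (W' ∩ Iic q) ∪ (W' ∩ Ioi q) := by
      intro x hx
      rcases le_or_gt x q with h | h
      · exact Or.inl ⟨hx, h⟩
      · exact Or.inr ⟨hx, h⟩
    by_contra hc
    push_neg at hc
    have h0 : volume (W' ∩ Ioi q) = 0 := le_antisymm hc zero_le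
    have hle2 : volume W' ≤ volume (W' ∩ Iic q) + volume (W' ∩ Ioi q) :=
      (measure_mono hsplit).trans (measure_union_le _ _)
    rw [hIic0, h0, add_zero] at hle2
    exact absurd (lt_of_lt_of_le hW'pos hle2) (lt_irrefl 0)
  obtain ⟨x, hxmem⟩ : (W' ∩ Ioi q).Nonempty := nonempty_of_measure_ne_zero hIoipos.ne'
  obtain ⟨t, htB, htx⟩ := exists_lt_of_csInf_lt ⟨_, hBne⟩ hxmem.2
  have hle : volume (W' ∩ Iic t) ≤ volume (W' ∩ Iic x) :=
    measure_mono (inter_subset_inter_right _ (Iic_subset_Iic.2 htx.le))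
  rw [key x hxmem.1] at hle
  exact absurd (lt_of_lt_of_le htB hle) (lt_irrefl 0)


end OpTAux

open OpTAux in
/-- The operator `T(f) = f_{(2)|2}/2 + (f ∗ f ∗ f_{(1)|(n+1)})/2` strictly increases the
mean of any density on `[0,∞)` with finite mean `m > 0`; consequently no such density is
a fixed point of `T`. -/
theorem operator_increases_mean
    (f : ℝ → ℝ) (n : ℕ) (hn : 1 ≤ n)
    (hmeas : Measurable f) (hnn : ∀ x, 0 ≤ f x) (hsupp : ∀ x, x < 0 → f x = 0)
    (hint : ∫ x, f x = 1) (hmom : Integrable (fun x => x * f x))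
    (m : ℝ) (hm : m = ∫ x, x * f x) (hmpos : 0 < m) :
    m < ∫ x, x * opT f n x ∧ opT f n ≠ f := by
  have hfi : Integrable f := int_f hnn hint
  set F := cdfOf f with hFdef
  have hFm : Measurable F := F_meas hfi hnn
  have h1F : ∀ x, 0 ≤ 1 - F x := fun x => sub_nonneg.2 (F_le_one hfi hnn hint x)
  have h1F1 : ∀ x, 1 - F x ≤ 1 := fun x => by have := F_nonneg hnn x; linarith
  set g := minDensity f n with hgdef
  have hgeq : ∀ x, g x = ((n:ℝ) + 1) * (f x * (1 - F x) ^ n) := fun x => by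
    rw [hgdef, minDensity, mul_assoc]
  have hgnn : ∀ x, 0 ≤ g x := fun x => by
    rw [hgeq]
    exact mul_nonneg (by positivity) (mul_nonneg (hnn x) (pow_nonneg (h1F x) n))
  have hgs : ∀ x, x < 0 → g x = 0 := fun x hx => by
    rw [hgeq, hsupp x hx]
    ring
  have hgmeas : Measurable g := by
    rw [hgdef]
    unfold minDensity
    exact (measurable_const.mul hmeas).mul ((measurable_const.sub hFm).pow_const n)
  have hgle : ∀ x, g x ≤ ((n:ℝ) + 1) * f x := by
    intro x
    rw [hgeq]
    apply mul_le_mul_of_nonneg_left _ (by positivity)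
    calc f x * (1 - F x) ^ n ≤ f x * 1 := by
          apply mul_le_mul_of_nonneg_left _ (hnn x)
          exact pow_le_one₀ (h1F x) (h1F1 x)
      _ = f x := mul_one _
  have hgi : Integrable g := by
    refine (hfi.const_mul ((n:ℝ) + 1)).mono hgmeas.aestronglyMeasurable
      (Filter.Eventually.of_forall fun x => ?_)
    rw [Real.norm_eq_abs, Real.norm_eq_abs, abs_of_nonneg (hgnn x), abs_mul,
      abs_of_nonneg (show (0:ℝ) ≤ (n:ℝ) + 1 by positivity), abs_of_nonneg (hnn x)]
    exact hgle x
  have hgx : Integrable (fun x => x * g x) := by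
    refine (hmom.const_mul ((n:ℝ) + 1)).mono
      ((measurable_id.mul hgmeas).aestronglyMeasurable)
      (Filter.Eventually.of_forall fun x => ?_)
    rw [Real.norm_eq_abs, Real.norm_eq_abs, abs_mul, abs_of_nonneg (hgnn x), abs_mul, abs_mul,
      abs_of_nonneg (show (0:ℝ) ≤ (n:ℝ) + 1 by positivity), abs_of_nonneg (hnn x)]
    calc |x| * g x ≤ |x| * (((n:ℝ) + 1) * f x) :=
          mul_le_mul_of_nonneg_left (hgle x) (abs_nonneg x)
      _ = ((n:ℝ) + 1) * (|x| * f x) := by ring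
  have hgint1 : ∫ x, g x = 1 := by
    have h1 : ∫ x, g x = ((n:ℝ) + 1) * ∫ x, f x * (1 - F x) ^ n := by
      simp only [hgeq]
      exact integral_const_mul _ _
    rw [h1, hFdef, key_integral hmeas hfi hnn hint hn]
    have : ((n:ℝ) + 1) ≠ 0 := by positivity
    field_simp
  have hIg : 0 ≤ ∫ x, x * g x := by
    apply integral_nonneg
    intro x
    show 0 ≤ x * g x
    rcases lt_or_ge x 0 with hx | hx
    · rw [hgs x hx, mul_zero]
    · exact mul_nonneg hx (hgnn x)
  -- first convolution
  obtain ⟨h1nn, h1z, h1i, h1int, h1mi, h1mom⟩ :=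
    conv_props hnn hgnn hsupp hgs hfi hgi hmom hgx
  -- second convolution
  obtain ⟨h2nn, h2z, h2i, h2int, h2mi, h2mom⟩ :=
    conv_props hnn h1nn hsupp h1z hfi h1i hmom h1mi
  rw [hint] at h1int h1mom h2mom
  rw [hgint1] at h1int h1mom
  norm_num at h1int h1mom
  rw [h1int, h1mom] at h2mom
  norm_num at h2mom
  -- positivity of the max part
  have hmompos : 0 < ∫ x, x * f x := hm ▸ hmpos
  have hPpos : 0 < ∫ x, x * f x * F x := xfF_pos hmeas hfi hnn hint hsupp hmom hmompos
  have hPint : Integrable (fun x => x * f x * F x) :=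
    xfF_integrable hmeas hfi hnn hint hsupp hmom
  -- split the mean of opT
  have hsplit : (fun x => x * opT f n x) =
      fun x => x * f x * F x + (x * convNN f (convNN f g) x) / 2 := by
    funext x
    simp only [opT, maxDensity2, ← hgdef, ← hFdef]
    ring
  have hmean : ∫ x, x * opT f n x =
      (∫ x, x * f x * F x) + (∫ x, x * convNN f (convNN f g) x) / 2 := by
    rw [hsplit, integral_add hPint (h2mi.div_const 2), integral_div]
  have hstrict : m < ∫ x, x * opT f n x := by
    rw [hmean, h2mom, ← hm]
    linarith
  refine ⟨hstrict, fun heq => ?_⟩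
  have heq2 : ∫ x, x * opT f n x = m := by
    rw [heq, ← hm]
  linarith
end
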